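/- arXiv:2202.13809 — 10 statements merged into one kernel-verified Lean document; each statement's English description precedes it below -/
import Mathlib

section
/- Let F be a cellular automaton on alphabet A that is left expansive with dimensions (h,d,w). If x in A^Z and i in Z are such that the trace of x over the interval [i, i+w-1] (i.e., the sequence t ↦ F^t(x)[i..i+w-1]) is eventually p-periodic with preperiod c, then the trace of x over the interval [i-1, i+w-2] is eventually p-periodic with preperiod c+h. -/
/-! The rectangle of the trace window at time `t + p` coincides with the one at time `t`
once `t - h ≥ c`, so left expansivity forces equal symbols just left of the window; the
remaining cells of the shifted window already lie in the original one. -/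

/-- `F` is a cellular automaton: it is given by some `(m,n)` local rule. -/
def IsCA {A : Type*} (F : (ℤ → A) → ℤ → A) : Prop :=
  ∃ (m n : ℕ) (f : (Fin (m + n + 1) → A) → A),
    ∀ x i, F x i = f fun k => x (i - (m : ℤ) + (k.val : ℤ))

/-- `F` is left expansive with dimensions `(h, d, w)`: the contents of a translated
rectangle (spatial offsets `0,...,w-1`, time iterates `t - b` for `-d ≤ b ≤ h`) in any two
space-time diagrams determine the symbol immediately to the left of the rectangle
(at time iterate `t`). -/
def LeftExpansive {A : Type*} (F : (ℤ → A) → ℤ → A) (h d w : ℕ) : Prop :=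
  ∀ (x₁ x₂ : ℤ → A) (i₁ i₂ : ℤ) (t₁ t₂ : ℕ), h ≤ t₁ → h ≤ t₂ →
    (∀ (a : ℕ) (b : ℤ), a < w → -(d : ℤ) ≤ b → b ≤ (h : ℤ) →
      F^[((t₁ : ℤ) - b).toNat] x₁ (i₁ + (a : ℤ)) = F^[((t₂ : ℤ) - b).toNat] x₂ (i₂ + (a : ℤ))) →
    F^[t₁] x₁ (i₁ - 1) = F^[t₂] x₂ (i₂ - 1)

/-- A one-sided sequence is eventually `p`-periodic for some `p ≥ 1`. -/
def EvPeriodicSeq {B : Type*} (y : ℕ → B) : Prop :=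
  ∃ p : ℕ, 1 ≤ p ∧ ∃ c : ℕ, ∀ t, c ≤ t → y (t + p) = y t

theorem LeftExpansive.iterate_add_period_sub_one {A : Type*} {F : (ℤ → A) → ℤ → A}
    {h d w : ℕ} (hexp : LeftExpansive F h d w) {x : ℤ → A} {i : ℤ} {p c : ℕ}
    (hper : ∀ t, c ≤ t → ∀ k : Fin w,
      F^[t + p] x (i + (k.val : ℤ)) = F^[t] x (i + (k.val : ℤ)))
    {t : ℕ} (ht : c + h ≤ t) :
    F^[t + p] x (i - 1) = F^[t] x (i - 1) := by
  refine hexp x x i i (t + p) t (by omega) (by omega) fun a b ha _ hb => ?_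
  have hshift : (((t + p : ℕ) : ℤ) - b).toNat = ((t : ℤ) - b).toNat + p := by omega
  rw [hshift]
  exact hper _ (by omega) ⟨a, ha⟩

theorem stmt_0_general {A : Type*} (F : (ℤ → A) → ℤ → A)
    (h d w : ℕ) (hexp : LeftExpansive F h d w)
    (x : ℤ → A) (i : ℤ) (p c : ℕ)
    (hper : ∀ t, c ≤ t → ∀ k : Fin w,
      F^[t + p] x (i + (k.val : ℤ)) = F^[t] x (i + (k.val : ℤ))) :
    ∀ t, c + h ≤ t → ∀ k : Fin w,
      F^[t + p] x ((i - 1) + (k.val : ℤ)) = F^[t] x ((i - 1) + (k.val : ℤ)) := by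
  rintro t ht ⟨k, hk⟩
  rcases k with _ | k
  · simpa using hexp.iterate_add_period_sub_one hper ht
  · have hcell : i - 1 + ((k + 1 : ℕ) : ℤ) = i + (k : ℤ) := by push_cast; ring
    simpa only [hcell] using hper t (by omega) ⟨k, by omega⟩

/-- If `F` is a left expansive CA with dimensions `(h,d,w)` and the trace of `x` over
`[i, i+w-1]` is eventually `p`-periodic with preperiod `c`, then the trace of `x` over
`[i-1, i+w-2]` is eventually `p`-periodic with preperiod `c + h`. -/
theorem stmt_0 {A : Type*} (F : (ℤ → A) → ℤ → A) (hF : IsCA F)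
    (h d w : ℕ) (hw : 1 ≤ w) (hexp : LeftExpansive F h d w)
    (x : ℤ → A) (i : ℤ) (p c : ℕ) (hp : 1 ≤ p)
    (hper : ∀ t, c ≤ t → ∀ k : Fin w,
      F^[t + p] x (i + (k.val : ℤ)) = F^[t] x (i + (k.val : ℤ))) :
    ∀ t, c + h ≤ t → ∀ k : Fin w,
      F^[t + p] x ((i - 1) + (k.val : ℤ)) = F^[t] x ((i - 1) + (k.val : ℤ)) :=
  stmt_0_general F h d w hexp x i p c hper
end

section
/- If F: A^Z → A^Z is a rapidly left expansive cellular automaton with width w and x is a number-like configuration (x ≠ 0^Z and x[i] = 0 for all sufficiently small i), then for every i ∈ Z the trace of x over the interval [i, i+w-1] with respect to F is not eventually periodic. -/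
/-- A configuration is number-like: nonzero, and zero at all sufficiently small coordinates. -/
def NumberLike {A : Type*} [Zero A] (x : ℤ → A) : Prop :=
  (∃ i, x i ≠ 0) ∧ ∃ N : ℤ, ∀ i < N, x i = 0

/-- The left edge of a configuration: the least coordinate with a nonzero symbol. -/
noncomputable def lbound {A : Type*} [Zero A] (x : ℤ → A) : ℤ :=
  sInf {N : ℤ | x N ≠ 0}

/-- `F` is left spreading on number-like configurations. -/
def LeftSpreading {A : Type*} [Zero A] (F : (ℤ → A) → ℤ → A) : Prop :=
  F (fun _ => 0) = (fun _ => 0) ∧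
    ∀ x, NumberLike x → ∃ t : ℕ, 1 ≤ t ∧ lbound (F^[t] x) < lbound x

/-- The spreading speed of `F`:
`sup` over number-like `x` of `limsup_t (-lbound(F^t(x)))/t`. -/
noncomputable def spreadingSpeed {A : Type*} [Zero A] (F : (ℤ → A) → ℤ → A) : ℝ :=
  ⨆ x : {x : ℤ → A // NumberLike x},
    Filter.limsup (fun t : ℕ => -((lbound (F^[t] x.1) : ℝ)) / (t : ℝ)) Filter.atTop

/-- `F` is rapidly left expansive with width `w`: left expansive with dimensions `(h,d,w)`,
left spreading with spreading speed `s`, and `s < 1/h` (equivalently `s * h < 1`,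
which also covers the case `h = 0`). -/
def RapidlyLeftExpansive {A : Type*} [Zero A] (F : (ℤ → A) → ℤ → A) (w : ℕ) : Prop :=
  ∃ h d : ℕ, LeftExpansive F h d w ∧ LeftSpreading F ∧ spreadingSpeed F * (h : ℝ) < 1

/-!
If the trace on `[i, i + w)` were `p`-periodic from time `c` on, left expansivity would propagate
periodicity to the left: column `i - k` is `p`-periodic from time `c + k h` on. Left spreading
pushes the left edge of `F^t x` to `-∞`, so for arbitrarily large `k` the column `i - k` is not
identically zero, and by periodicity it is already nonzero at some time `t < c + k h + p`. Hence
the left edge covers distance `k` within time about `k h`, so the spreading speed is at least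
`1 / h`. When `h = 0` the same argument contradicts the bound
`lbound (F^t x) ≥ lbound x - n t` coming from the radius `n` of the local rule.
-/

open Filter

theorem exists_lt_add_eq_of_periodic_from {B : Type*} {y : ℕ → B} {c p : ℕ} (hp : 1 ≤ p)
    (hper : ∀ t, c ≤ t → y (t + p) = y t) (t₀ : ℕ) : ∃ t < c + p, y t = y t₀ := by
  induction t₀ using Nat.strong_induction_on with
  | _ t₀ ih =>
    by_cases ht₀ : t₀ < c + p
    · exact ⟨t₀, ht₀, rfl⟩
    · obtain ⟨t, ht, hyt⟩ := ih (t₀ - p) (by omega)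
      refine ⟨t, ht, hyt.trans ?_⟩
      rw [← hper (t₀ - p) (by omega), Nat.sub_add_cancel (by omega)]

theorem Real.limsup_le_of_eventually_le_of_nonneg {ι : Type*} {f : Filter ι} {u : ι → ℝ} {a : ℝ}
    (ha : 0 ≤ a) (h : ∀ᶠ t in f, u t ≤ a) : limsup u f ≤ a := by
  by_cases hu : IsCoboundedUnder (· ≤ ·) f u
  · exact limsup_le_of_le hu h
  · rwa [Real.limsup_of_not_isCoboundedUnder hu]

theorem exists_le_mul_add_of_limsup_div_lt {u : ℕ → ℝ} {a : ℝ} (ha : 0 ≤ a)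
    (hu : IsBoundedUnder (· ≤ ·) atTop fun t => u t / t)
    (hlt : limsup (fun t => u t / t) atTop < a) : ∃ C, ∀ t, u t ≤ a * t + C := by
  obtain ⟨T, hT⟩ :=
    eventually_atTop.1 ((eventually_lt_of_limsup_lt hlt hu).and (eventually_ge_atTop 1))
  have hC : 0 ≤ ∑ s ∈ Finset.range T, |u s| := Finset.sum_nonneg fun s _ => abs_nonneg _
  refine ⟨∑ s ∈ Finset.range T, |u s|, fun t => ?_⟩
  by_cases ht : T ≤ t
  · obtain ⟨hut, ht₁⟩ := hT t ht
    rw [div_lt_iff₀ (by exact_mod_cast ht₁)] at hut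
    linarith
  · calc u t ≤ |u t| := le_abs_self _
      _ ≤ ∑ s ∈ Finset.range T, |u s| :=
        Finset.single_le_sum (fun s _ => abs_nonneg (u s)) (Finset.mem_range.2 (by omega))
      _ ≤ a * t + ∑ s ∈ Finset.range T, |u s| := le_add_of_nonneg_left (by positivity)

section CellularAutomaton

variable {A : Type*} {F : (ℤ → A) → ℤ → A} {m n : ℕ} {f : (Fin (m + n + 1) → A) → A}

def HasLocalRule (F : (ℤ → A) → ℤ → A) (m n : ℕ) (f : (Fin (m + n + 1) → A) → A) : Prop :=
  ∀ x i, F x i = f fun k => x (i - (m : ℤ) + (k.val : ℤ))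

theorem HasLocalRule.commute_shift (hf : HasLocalRule F m n f) (c : ℤ) :
    Function.Commute F fun y j => y (j + c) := by
  intro y
  show F (fun j => y (j + c)) = fun j => F y (j + c)
  funext j
  rw [hf, hf]
  congr 1
  funext k
  congr 1
  ring

theorem HasLocalRule.apply_eq_zero_of_lt [Zero A] (hf : HasLocalRule F m n f)
    (hz : F (fun _ => 0) = fun _ => 0) {y : ℤ → A} {N : ℤ} (hy : ∀ j < N, y j = 0) {j : ℤ}
    (hj : j < N - n) : F y j = 0 := by
  have hFy : F y j = F (fun _ => 0) j := by
    rw [hf, hf]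
    congr 1
    funext k
    have := k.isLt
    exact hy _ (by omega)
  rw [hFy, hz]

namespace NumberLike

variable [Zero A] {y : ℤ → A}

theorem bddBelow (hy : NumberLike y) : BddBelow {N | y N ≠ 0} := by
  obtain ⟨-, N, hN⟩ := hy
  exact ⟨N, fun j hj => not_lt.1 fun hlt => hj (hN j hlt)⟩

theorem lbound_le (hy : NumberLike y) {j : ℤ} (hj : y j ≠ 0) : lbound y ≤ j :=
  csInf_le hy.bddBelow hj

theorem apply_lbound_ne_zero (hy : NumberLike y) : y (lbound y) ≠ 0 :=
  Int.csInf_mem hy.1 hy.bddBelow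

theorem eq_zero_of_lt_lbound (hy : NumberLike y) {j : ℤ} (hj : j < lbound y) : y j = 0 := by
  by_contra h
  exact (hy.lbound_le h).not_gt hj

theorem comp_add_const (hy : NumberLike y) (c : ℤ) : NumberLike fun j => y (j + c) := by
  obtain ⟨⟨j, hj⟩, N, hN⟩ := hy
  exact ⟨⟨j - c, by simpa using hj⟩, N - c, fun k hk => hN _ (by omega)⟩

end NumberLike

namespace LeftSpreading

variable [Zero A] {x y : ℤ → A}

theorem exists_apply_ne_zero (hsp : LeftSpreading F) (hf : HasLocalRule F m n f)
    (hy : NumberLike y) : ∃ j, F y j ≠ 0 := by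
  by_contra! hFy
  have hFy : F y = fun _ => 0 := funext hFy
  -- `lbound (fun _ => 0) = sInf ∅ = 0`, so we translate the left edge of `y` to `0`.
  have hy' := hy.comp_add_const (lbound y)
  obtain ⟨t, ht, hlt⟩ := hsp.2 _ hy'
  have hzero : F^[t] (fun j => y (j + lbound y)) = fun _ => 0 := by
    obtain ⟨s, rfl⟩ := Nat.exists_eq_add_of_le' ht
    rw [(hf.commute_shift _).iterate_left, Function.iterate_succ_apply, hFy,
      Function.iterate_fixed hsp.1]
  have hedge : lbound (fun j => y (j + lbound y)) ≤ 0 :=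
    hy'.lbound_le (by simpa using hy.apply_lbound_ne_zero)
  have hzero_edge : lbound (fun _ : ℤ => (0 : A)) = 0 := by simp [lbound]
  rw [hzero, hzero_edge] at hlt
  exact hlt.not_ge hedge

theorem numberLike_apply (hsp : LeftSpreading F) (hf : HasLocalRule F m n f)
    (hy : NumberLike y) : NumberLike (F y) :=
  ⟨hsp.exists_apply_ne_zero hf hy, lbound y - n, fun _ hj =>
    hf.apply_eq_zero_of_lt hsp.1 (fun _ => hy.eq_zero_of_lt_lbound) hj⟩

theorem numberLike_iterate (hsp : LeftSpreading F) (hf : HasLocalRule F m n f)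
    (hx : NumberLike x) (t : ℕ) : NumberLike (F^[t] x) := by
  induction t with
  | zero => exact hx
  | succ t ih =>
    rw [Function.iterate_succ_apply']
    exact hsp.numberLike_apply hf ih

theorem lbound_sub_le_lbound_apply (hsp : LeftSpreading F) (hf : HasLocalRule F m n f)
    (hy : NumberLike y) : lbound y - n ≤ lbound (F y) :=
  not_lt.1 fun hlt => (hsp.numberLike_apply hf hy).apply_lbound_ne_zero
    (hf.apply_eq_zero_of_lt hsp.1 (fun _ => hy.eq_zero_of_lt_lbound) hlt)

theorem lbound_sub_mul_le_lbound_iterate (hsp : LeftSpreading F) (hf : HasLocalRule F m n f)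
    (hx : NumberLike x) (t : ℕ) : lbound x - n * t ≤ lbound (F^[t] x) := by
  induction t with
  | zero => simp
  | succ t ih =>
    have := hsp.lbound_sub_le_lbound_apply hf (hsp.numberLike_iterate hf hx t)
    rw [Function.iterate_succ_apply']
    push_cast
    linarith

theorem exists_lbound_iterate_lt (hsp : LeftSpreading F) (hf : HasLocalRule F m n f)
    (hx : NumberLike x) (M : ℤ) : ∃ t, lbound (F^[t] x) < M := by
  suffices ∀ r : ℕ, ∃ t, lbound (F^[t] x) ≤ lbound x - r by
    obtain ⟨t, ht⟩ := this (lbound x - M + 1).toNat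
    exact ⟨t, by omega⟩
  intro r
  induction r with
  | zero => exact ⟨0, by simp⟩
  | succ r ih =>
    obtain ⟨t, ht⟩ := ih
    obtain ⟨s, -, hs⟩ := hsp.2 _ (hsp.numberLike_iterate hf hx t)
    rw [← Function.iterate_add_apply] at hs
    exact ⟨s + t, by push_cast; omega⟩

theorem eventually_neg_lbound_iterate_div_le (hsp : LeftSpreading F) (hf : HasLocalRule F m n f)
    (hx : NumberLike x) :
    ∀ᶠ t : ℕ in atTop, -(lbound (F^[t] x) : ℝ) / t ≤ n + 1 := by
  filter_upwards [eventually_ge_atTop (max 1 (-lbound x).toNat)] with t ht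
  have hlow := hsp.lbound_sub_mul_le_lbound_iterate hf hx t
  have ht₀ : (0 : ℝ) < t := by exact_mod_cast (le_max_left _ _).trans ht
  have hxt : -lbound x ≤ t := by omega
  have hbound : -lbound (F^[t] x) ≤ (n + 1) * (t : ℤ) := by linarith
  rw [div_le_iff₀ ht₀]
  exact_mod_cast hbound

theorem limsup_le_spreadingSpeed (hsp : LeftSpreading F) (hf : HasLocalRule F m n f)
    (hx : NumberLike x) :
    limsup (fun t : ℕ => -(lbound (F^[t] x) : ℝ) / t) atTop ≤ spreadingSpeed F := by
  refine le_ciSup (f := fun y : {y // NumberLike y} =>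
    limsup (fun t : ℕ => -(lbound (F^[t] y.1) : ℝ) / t) atTop) ⟨n + 1, ?_⟩ ⟨x, hx⟩
  rintro _ ⟨y, rfl⟩
  exact Real.limsup_le_of_eventually_le_of_nonneg (by positivity)
    (hsp.eventually_neg_lbound_iterate_div_le hf y.2)

theorem exists_neg_lbound_iterate_le (hsp : LeftSpreading F) (hf : HasLocalRule F m n f)
    (hx : NumberLike x) {h : ℕ} (hs : spreadingSpeed F * h < 1) :
    ∃ a C : ℝ, 0 ≤ a ∧ a * h < 1 ∧ ∀ t : ℕ, -(lbound (F^[t] x) : ℝ) ≤ a * t + C := by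
  rcases Nat.eq_zero_or_pos h with rfl | hh
  · refine ⟨n, -lbound x, by positivity, by simp, fun t => ?_⟩
    have hlow := hsp.lbound_sub_mul_le_lbound_iterate hf hx t
    have hbound : -lbound (F^[t] x) ≤ n * t + -lbound x := by linarith
    exact_mod_cast hbound
  · have hh' : (0 : ℝ) < h := by exact_mod_cast hh
    obtain ⟨a, hsa, hah⟩ := exists_between
      (max_lt ((lt_div_iff₀ hh').2 (by linarith)) (by positivity : (0 : ℝ) < 1 / h))
    obtain ⟨C, hC⟩ := exists_le_mul_add_of_limsup_div_lt ((le_max_right _ _).trans hsa.le)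
      (isBoundedUnder_of_eventually_le (hsp.eventually_neg_lbound_iterate_div_le hf hx))
      ((hsp.limsup_le_spreadingSpeed hf hx).trans_lt ((le_max_left _ _).trans_lt hsa))
    exact ⟨a, C, (le_max_right _ _).trans hsa.le, (lt_div_iff₀ hh').1 hah, hC⟩

end LeftSpreading

theorem LeftExpansive.iterate_add_period {h d w : ℕ} (hexp : LeftExpansive F h d w)
    {x : ℤ → A} {i : ℤ} {c p : ℕ}
    (hper : ∀ j, i ≤ j → j < i + w → ∀ t, c ≤ t → F^[t + p] x j = F^[t] x j) (k : ℕ) :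
    ∀ j, i - k ≤ j → j < i + w → ∀ t, c + k * h ≤ t → F^[t + p] x j = F^[t] x j := by
  induction k with
  | zero => simpa using hper
  | succ k ih =>
    intro j hj hjw t ht
    rw [Nat.succ_mul] at ht
    rcases eq_or_lt_of_le hj with rfl | hj
    · have hleft := hexp x x (i - k) (i - k) (t + p) t (by omega) (by omega)
        fun a b ha hb₁ hb₂ => by
          have hshift : (((t + p : ℕ) : ℤ) - b).toNat = ((t : ℤ) - b).toNat + p := by omega
          rw [hshift]
          exact ih _ (by omega) (by omega) _ (by omega)
      convert hleft using 2 <;> push_cast <;> ring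
    · exact ih j (by push_cast at hj; omega) hjw t (by omega)

theorem LeftSpreading.exists_lbound_iterate_le_of_periodic [Zero A] {h d w c p : ℕ}
    {x : ℤ → A} {i : ℤ} (hsp : LeftSpreading F) (hf : HasLocalRule F m n f)
    (hx : NumberLike x) (hexp : LeftExpansive F h d w) (hp : 1 ≤ p)
    (hper : ∀ j, i ≤ j → j < i + w → ∀ t, c ≤ t → F^[t + p] x j = F^[t] x j) (K : ℕ) :
    ∃ k ≥ K, ∃ t < c + k * h + p, lbound (F^[t] x) ≤ i - k := by
  obtain ⟨t₀, ht₀⟩ := hsp.exists_lbound_iterate_lt hf hx (i - K)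
  obtain ⟨k, hk⟩ : ∃ k : ℕ, (k : ℤ) = i - lbound (F^[t₀] x) := ⟨_, Int.toNat_of_nonneg (by omega)⟩
  obtain ⟨t, ht, heq⟩ := exists_lt_add_eq_of_periodic_from (y := fun t => F^[t] x (i - k)) hp
    (hexp.iterate_add_period hper k _ le_rfl (by omega)) t₀
  refine ⟨k, by omega, t, ht, (hsp.numberLike_iterate hf hx t).lbound_le ?_⟩
  rw [heq, show i - k = lbound (F^[t₀] x) by omega]
  exact (hsp.numberLike_iterate hf hx t₀).apply_lbound_ne_zero

end CellularAutomaton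

theorem stmt_1_general {A : Type*} [Zero A] (F : (ℤ → A) → ℤ → A) (hF : IsCA F)
    (w : ℕ) (hre : RapidlyLeftExpansive F w)
    (x : ℤ → A) (hx : NumberLike x) (i : ℤ) :
    ¬ EvPeriodicSeq (fun t => fun k : Fin w => F^[t] x (i + (k.val : ℤ))) := by
  rintro ⟨p, hp, c, hper⟩
  obtain ⟨m, n, f, hf⟩ := hF
  obtain ⟨h, d, hexp, hsp, hs⟩ := hre
  have hcol : ∀ j, i ≤ j → j < i + w → ∀ t, c ≤ t → F^[t + p] x j = F^[t] x j := by
    intro j hij hjw t ht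
    have := congrFun (hper t ht) ⟨(j - i).toNat, by omega⟩
    simpa [Int.toNat_of_nonneg (sub_nonneg.2 hij)] using this
  obtain ⟨a, C, ha, hah, hbound⟩ := hsp.exists_neg_lbound_iterate_le hf hx hs
  obtain ⟨K, hK⟩ := exists_nat_gt ((i + a * (c + p) + C) / (1 - a * h))
  obtain ⟨k, hkK, t, ht, hlt⟩ := hsp.exists_lbound_iterate_le_of_periodic hf hx hexp hp hcol K
  have hdist : (k : ℝ) - i ≤ a * (c + k * h + p) + C := calc
    (k : ℝ) - i ≤ -(lbound (F^[t] x) : ℝ) := by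
      exact_mod_cast (by omega : (k : ℤ) - i ≤ -lbound (F^[t] x))
    _ ≤ a * t + C := hbound t
    _ ≤ a * (c + k * h + p) + C := by gcongr; exact_mod_cast ht.le
  rw [div_lt_iff₀ (by linarith)] at hK
  have hKk : (K : ℝ) ≤ k := by exact_mod_cast hkK
  nlinarith [mul_le_mul_of_nonneg_right hKk (sub_nonneg.2 hah.le)]

/-- If `F` is a rapidly left expansive CA with width `w` and `x` is a number-like
configuration, then the trace of `x` over `[i, i+w-1]` is not eventually periodic,
for any `i ∈ ℤ`. -/
theorem stmt_1 {A : Type*} [Zero A] (F : (ℤ → A) → ℤ → A) (hF : IsCA F)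
    (w : ℕ) (hw : 1 ≤ w) (hre : RapidlyLeftExpansive F w)
    (x : ℤ → A) (hx : NumberLike x) (i : ℤ) :
    ¬ EvPeriodicSeq (fun t => fun k : Fin w => F^[t] x (i + (k.val : ℤ))) :=
  stmt_1_general F hF w hre x hx i
end

section
/- Let p > q > 1 be coprime integers and n = pq. The multiplication automaton Mul_{p,pq} with (0,1) local rule mul_{p,pq}(a,b) = a₀p + b₁, where a = a₁q + a₀ and b = b₁q + b₀ with a₀,b₀ ∈ {0,...,q-1} and a₁,b₁ ∈ {0,...,p-1}, satisfies real_n(Mul_{p,pq}(config_n(ξ))) = pξ for all real ξ > 0. -/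
/-!
Writing `truncN n ξ i = ⌊ξ / nⁱ⌋ nⁱ` for `ξ` truncated at place `i`, the base-`n` digit at
place `i` contributes exactly `truncN n ξ i - truncN n ξ (i + 1)`; since the truncations tend to
`ξ` and to `0` at the two ends, the digits of `ξ` sum to `ξ`. For `n = pq`, multiplying a digit
`d = d₁ q + d₀` by `p` gives `d₀ p` at the same place and `d₁ pq`, that is `d₁` carried one place
up. As `d₀ p + c ≤ (q - 1) p + (p - 1) < pq` for the carry `c` from the place below, the local
rule adds the carry without overflow, so the digits of `Mul_{p,pq}(config_n ξ)` sum to `p ξ`.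
-/

/-- The `i`-th digit of `ξ` in base `n`: `⌊ξ / n^i⌋ mod n`. -/
noncomputable def digitN (n : ℕ) (ξ : ℝ) (i : ℤ) : ℕ :=
  (⌊ξ / (n : ℝ) ^ i⌋ % (n : ℤ)).toNat

/-- The configuration of base-`n` digits of `ξ`: `configN n ξ [i] = ξ_{-i-1}`. -/
noncomputable def configN (n : ℕ) (hn : 0 < n) (ξ : ℝ) : ℤ → Fin n :=
  fun i => ⟨digitN n ξ (-i - 1) % n, Nat.mod_lt _ hn⟩

/-- The real number represented by a configuration: `Σ_i x[-i] n^{i-1} = Σ_i x[i] n^{-i-1}`. -/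
noncomputable def realN (n : ℕ) {m : ℕ} (x : ℤ → Fin m) : ℝ :=
  ∑' i : ℤ, ((x i : ℕ) : ℝ) * (n : ℝ) ^ (-i - 1)

/-- A configuration over `{0,...,m-1}` is number-like. -/
def NumberLikeF {m : ℕ} (x : ℤ → Fin m) : Prop :=
  (∃ i, (x i : ℕ) ≠ 0) ∧ ∃ N : ℤ, ∀ i < N, (x i : ℕ) = 0

/-- The local rule of multiplication by `p` in base `pq`: with `a = a₁q + a₀`,
`b = b₁q + b₀`, it maps `(a, b) ↦ a₀ p + b₁` (reduction mod `pq` never takes effect). -/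
def mulRule (p q : ℕ) (hn : 0 < p * q) (a b : Fin (p * q)) : Fin (p * q) :=
  ⟨((a : ℕ) % q * p + (b : ℕ) / q) % (p * q), Nat.mod_lt _ hn⟩

/-- The multiplication automaton `Mul_{p,pq}`, a CA with `(0,1)` local rule `mulRule`. -/
def mulP (p q : ℕ) (hn : 0 < p * q) (x : ℤ → Fin (p * q)) : ℤ → Fin (p * q) :=
  fun i => mulRule p q hn (x i) (x (i + 1))

/-- The fractional multiplication automaton `Mul_{p/q,pq} = σ⁻¹ ∘ Mul_{p,pq} ∘ Mul_{p,pq}`. -/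
def mulFrac (p q : ℕ) (hn : 0 < p * q) (x : ℤ → Fin (p * q)) : ℤ → Fin (p * q) :=
  fun i => mulP p q hn (mulP p q hn x) (i - 1)

open Filter Topology

noncomputable def truncN (n : ℕ) (ξ : ℝ) (i : ℤ) : ℝ := ⌊ξ / (n : ℝ) ^ i⌋ * (n : ℝ) ^ i

section Digits

variable {n : ℕ} {ξ : ℝ}

lemma digitN_lt (hn : 0 < n) (i : ℤ) : digitN n ξ i < n := by
  have hn' : (0 : ℤ) < n := by exact_mod_cast hn
  have hlt := Int.emod_lt_of_pos ⌊ξ / (n : ℝ) ^ i⌋ hn'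
  have hnonneg := Int.emod_nonneg ⌊ξ / (n : ℝ) ^ i⌋ hn'.ne'
  unfold digitN
  omega

lemma configN_val (hn : 0 < n) (i : ℤ) :
    (configN n hn ξ i : ℕ) = digitN n ξ (-i - 1) :=
  Nat.mod_eq_of_lt (digitN_lt hn _)

lemma digitN_mul_zpow (hn : 0 < n) (i : ℤ) :
    (digitN n ξ i : ℝ) * (n : ℝ) ^ i = truncN n ξ i - truncN n ξ (i + 1) := by
  have hn' : (n : ℝ) ≠ 0 := by positivity
  have hfloor : ⌊ξ / (n : ℝ) ^ (i + 1)⌋ = ⌊ξ / (n : ℝ) ^ i⌋ / n := by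
    rw [← Int.floor_div_natCast, zpow_add_one₀ hn', div_div]
  have hdigit : (digitN n ξ i : ℤ) = ⌊ξ / (n : ℝ) ^ i⌋ - n * ⌊ξ / (n : ℝ) ^ (i + 1)⌋ := by
    rw [digitN, Int.toNat_of_nonneg (Int.emod_nonneg _ (by exact_mod_cast hn.ne')), hfloor,
      Int.emod_def]
  have hdigit' : (digitN n ξ i : ℝ) = ⌊ξ / (n : ℝ) ^ i⌋ - n * ⌊ξ / (n : ℝ) ^ (i + 1)⌋ := by
    exact_mod_cast hdigit
  rw [hdigit', truncN, truncN, zpow_add_one₀ hn']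
  ring

lemma tendsto_truncN_natCast (hn : 1 < n) (hξ : 0 ≤ ξ) :
    Tendsto (fun k : ℕ => truncN n ξ k) atTop (𝓝 0) := by
  have hn' : (1 : ℝ) < n := by exact_mod_cast hn
  have hsmall : ∀ᶠ k : ℕ in atTop, ξ / (n : ℝ) ^ k < 1 :=
    (tendsto_const_nhds.div_atTop (tendsto_pow_atTop_atTop_of_one_lt hn')).eventually_lt_const
      one_pos
  refine tendsto_const_nhds.congr' (hsmall.mono fun k hk => ?_)
  have : ⌊ξ / (n : ℝ) ^ (k : ℤ)⌋ = 0 := by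
    rw [Int.floor_eq_zero_iff, zpow_natCast]
    exact ⟨by positivity, hk⟩
  simp only [truncN, this, Int.cast_zero, zero_mul]

lemma truncN_le (hn : 0 < n) (i : ℤ) : truncN n ξ i ≤ ξ := by
  have hc : (0 : ℝ) < (n : ℝ) ^ i := by positivity
  calc truncN n ξ i ≤ ξ / (n : ℝ) ^ i * (n : ℝ) ^ i := by
        unfold truncN; gcongr; exact Int.floor_le _
    _ = ξ := div_mul_cancel₀ _ hc.ne'

lemma sub_zpow_le_truncN (hn : 0 < n) (i : ℤ) : ξ - (n : ℝ) ^ i ≤ truncN n ξ i := by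
  have hc : (0 : ℝ) < (n : ℝ) ^ i := by positivity
  calc ξ - (n : ℝ) ^ i = (ξ / (n : ℝ) ^ i - 1) * (n : ℝ) ^ i := by
        rw [sub_mul, div_mul_cancel₀ _ hc.ne', one_mul]
    _ ≤ truncN n ξ i := by
        unfold truncN; gcongr; exact (Int.sub_one_lt_floor _).le

lemma tendsto_truncN_neg_natCast (hn : 1 < n) :
    Tendsto (fun k : ℕ => truncN n ξ (-k)) atTop (𝓝 ξ) := by
  have hpow : Tendsto (fun k : ℕ => (n : ℝ) ^ (-(k : ℤ))) atTop (𝓝 0) := by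
    simpa only [zpow_neg, zpow_natCast, Function.comp_def] using
      tendsto_inv_atTop_zero.comp (tendsto_pow_atTop_atTop_of_one_lt (by exact_mod_cast hn))
  have hlower : Tendsto (fun k : ℕ => ξ - (n : ℝ) ^ (-(k : ℤ))) atTop (𝓝 ξ) := by
    simpa using tendsto_const_nhds.sub hpow
  exact tendsto_of_tendsto_of_tendsto_of_le_of_le hlower tendsto_const_nhds
    (fun k => sub_zpow_le_truncN (by omega) _) (fun k => truncN_le (by omega) _)

lemma hasSum_configN (hn1 : 1 < n) (hn : 0 < n) (hξ : 0 ≤ ξ) :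
    HasSum (fun i : ℤ => (configN n hn ξ i : ℝ) * (n : ℝ) ^ (-i - 1)) ξ := by
  set f : ℤ → ℝ := fun i => (configN n hn ξ i : ℝ) * (n : ℝ) ^ (-i - 1)
  have hf_nonneg : ∀ i, 0 ≤ f i := fun i => by positivity
  have hfrac : HasSum (fun k : ℕ => f k) (ξ - truncN n ξ 0) := by
    have hterm : ∀ k : ℕ, f k = truncN n ξ (-(k + 1 : ℕ)) - truncN n ξ (-k) := by
      intro k
      simp only [f, configN_val, digitN_mul_zpow hn]
      congr 2 <;> push_cast <;> ring
    rw [hasSum_iff_tendsto_nat_of_nonneg (fun k => hf_nonneg k)]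
    simp only [hterm, Finset.sum_range_sub (fun k => truncN n ξ (-k))]
    simpa using (tendsto_truncN_neg_natCast hn1).sub_const (truncN n ξ 0)
  have hint : HasSum (fun k : ℕ => f (-(k + 1))) (truncN n ξ 0) := by
    have hterm : ∀ k : ℕ, f (-(k + 1)) = truncN n ξ k - truncN n ξ (k + 1 : ℕ) := by
      intro k
      simp only [f, configN_val, digitN_mul_zpow hn]
      congr 2 <;> push_cast <;> ring
    rw [hasSum_iff_tendsto_nat_of_nonneg (fun k => hf_nonneg _)]
    simp only [hterm, Finset.sum_range_sub' (fun k : ℕ => truncN n ξ k)]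
    simpa using tendsto_const_nhds.sub (tendsto_truncN_natCast hn1 hξ)
  simpa using hfrac.of_nat_of_neg_add_one hint

end Digits

section Multiplication

variable {p q : ℕ}

lemma mulRule_val (hn : 0 < p * q) (a b : Fin (p * q)) :
    (mulRule p q hn a b : ℕ) = (a : ℕ) % q * p + (b : ℕ) / q := by
  have hq : 0 < q := Nat.pos_of_mul_pos_left hn
  have hlow : (a : ℕ) % q + 1 ≤ q := Nat.mod_lt _ hq
  have hhigh : (b : ℕ) / q < p := Nat.div_lt_of_lt_mul (mul_comm p q ▸ b.isLt)
  refine Nat.mod_eq_of_lt ?_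
  nlinarith

lemma hasSum_mulP (hn : 0 < p * q) {x : ℤ → Fin (p * q)} {ξ : ℝ}
    (hx : HasSum (fun i : ℤ => (x i : ℝ) * ((p * q : ℕ) : ℝ) ^ (-i - 1)) ξ) :
    HasSum (fun i : ℤ => (mulP p q hn x i : ℝ) * ((p * q : ℕ) : ℝ) ^ (-i - 1)) (p * ξ) := by
  set N : ℝ := ((p * q : ℕ) : ℝ)
  have hN : N ≠ 0 := by positivity
  set low : ℤ → ℝ := fun i => ((x i : ℕ) % q * p : ℕ) * N ^ (-i - 1)
  set high : ℤ → ℝ := fun i => ((x i : ℕ) / q : ℕ) * N ^ (-i)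
  have hsplit : ∀ i, (p : ℝ) * ((x i : ℝ) * N ^ (-i - 1)) = low i + high i := by
    intro i
    have hdigit : ((x i : ℕ) : ℝ) = ((x i : ℕ) % q : ℕ) + q * ((x i : ℕ) / q : ℕ) := by
      exact_mod_cast (Nat.mod_add_div _ q).symm
    have hpow : N ^ (-i) = p * q * N ^ (-i - 1) := by
      rw [zpow_sub_one₀ hN]; field_simp; push_cast [N]; ring
    simp only [low, high, hpow, hdigit]
    push_cast
    ring
  have hp : HasSum (fun i => low i + high i) (p * ξ) := by
    simpa only [hsplit] using hx.mul_left (p : ℝ)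
  have hsum : Summable (fun i => (p : ℝ) * ((x i : ℝ) * N ^ (-i - 1))) := (hx.mul_left _).summable
  have hlow_nonneg : ∀ i, 0 ≤ low i := fun i => by positivity
  have hhigh_nonneg : ∀ i, 0 ≤ high i := fun i => by positivity
  have hlow : Summable low := .of_nonneg_of_le hlow_nonneg
    (fun i => (le_add_of_nonneg_right (hhigh_nonneg i)).trans_eq (hsplit i).symm) hsum
  have hhigh : Summable high := .of_nonneg_of_le hhigh_nonneg
    (fun i => (le_add_of_nonneg_left (hlow_nonneg i)).trans_eq (hsplit i).symm) hsum
  have hshift : HasSum (fun i => high (i + 1)) (∑' i, high i) :=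
    ((Equiv.addRight (1 : ℤ)).hasSum_iff (f := high)).mpr hhigh.hasSum
  rw [hp.unique (hlow.hasSum.add hhigh.hasSum)]
  convert hlow.hasSum.add hshift using 2 with i
  simp only [mulP, mulRule_val, low, high, neg_add', Nat.cast_add, add_mul]

end Multiplication

theorem stmt_4_general (p q : ℕ) (hq : 1 < q) (hn : 0 < p * q) (ξ : ℝ) (hξ : 0 < ξ) :
    realN (p * q) (mulP p q hn (configN (p * q) hn ξ)) = (p : ℝ) * ξ := by
  have hn1 : 1 < p * q := hq.trans_le (Nat.le_mul_of_pos_left q (Nat.pos_of_mul_pos_right hn))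
  exact (hasSum_mulP hn (hasSum_configN hn1 hn hξ.le)).tsum_eq

/-- For coprime `p > q > 1` and `n = pq`, the multiplication automaton `Mul_{p,pq}`
satisfies `real_n(Mul_{p,pq}(config_n(ξ))) = p ξ` for all real `ξ > 0`. -/
theorem stmt_4 (p q : ℕ) (hq : 1 < q) (hpq : q < p) (hco : Nat.Coprime p q)
    (hn : 0 < p * q) (ξ : ℝ) (hξ : 0 < ξ) :
    realN (p * q) (mulP p q hn (configN (p * q) hn ξ)) = (p : ℝ) * ξ :=
  stmt_4_general p q hq hn ξ hξ
end

section
/- An elementary cellular automaton F with local rule f is left spreading on number-like configurations if and only if f(0,0,1) = 1; and in that case its spreading speed equals 1. -/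
/-!
If `f(0,0,1) = 1`, the leftmost nonzero cell of a number-like configuration writes a `1` one cell
to its left, while everything further left stays `0` because `f(0,0,0) = 0`; so the left edge
moves left by exactly one cell per step and the spreading speed is `1`. If `f(0,0,1) = 0`, then
`f(0,0,a) = 0` for both symbols `a`, so a configuration vanishing on the negative half-line keeps
vanishing there, and `Pi.single 0 1` is never pushed left.
-/

section lbound

variable {A : Type*} [Zero A] {x : ℤ → A} {N : ℤ}

theorem lbound_eq_of_forall_lt (hN : x N ≠ 0) (h : ∀ i < N, x i = 0) : lbound x = N :=
  IsLeast.csInf_eq ⟨hN, fun _ hi => not_lt.1 fun hlt => hi (h _ hlt)⟩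

theorem NumberLike.of_forall_lt (hN : x N ≠ 0) (h : ∀ i < N, x i = 0) : NumberLike x :=
  ⟨⟨N, hN⟩, N, h⟩

theorem NumberLike.isLeast_lbound (hx : NumberLike x) : IsLeast {i | x i ≠ 0} (lbound x) := by
  obtain ⟨hne, M, hM⟩ := hx
  have hbdd : BddBelow {i | x i ≠ 0} := ⟨M, fun _ hi => not_lt.1 fun hlt => hi (hM _ hlt)⟩
  exact ⟨Int.csInf_mem hne hbdd, fun _ hi => csInf_le hbdd hi⟩

theorem NumberLike.apply_lbound_ne_zero_s6 (hx : NumberLike x) : x (lbound x) ≠ 0 :=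
  hx.isLeast_lbound.1

theorem NumberLike.apply_of_lt_lbound (hx : NumberLike x) {i : ℤ} (hi : i < lbound x) :
    x i = 0 :=
  not_not.1 fun h => (hx.isLeast_lbound.2 h).not_gt hi

/-- Also holds for `x = 0`, because `sInf ∅ = 0` in `ℤ`. -/
theorem lbound_nonneg (h : ∀ i < 0, x i = 0) : 0 ≤ lbound x := by
  rcases Set.eq_empty_or_nonempty {i | x i ≠ 0} with hempty | hne
  · simp only [lbound, hempty, Int.csInf_empty, le_refl]
  · exact le_csInf hne fun _ hi => not_lt.1 fun hlt => hi (h _ hlt)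

end lbound

section Elementary

variable {f : Fin 2 → Fin 2 → Fin 2 → Fin 2} {F : (ℤ → Fin 2) → ℤ → Fin 2}
  (hF : ∀ x i, F x i = f (x (i - 1)) (x i) (x (i + 1))) (h0 : f 0 0 0 = 0)
include hF h0

theorem iterate_apply_eq_zero_of_lt (h1 : f 0 0 1 = 0) {x : ℤ → Fin 2} {N : ℤ}
    (hx : ∀ i < N, x i = 0) (t : ℕ) : ∀ i < N, F^[t] x i = 0 := by
  have hrule : ∀ a, f 0 0 a = 0 := fun a => by fin_cases a <;> assumption
  induction t with
  | zero => exact hx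
  | succ t ih =>
    intro i hi
    rw [Function.iterate_succ_apply', hF, ih _ (by omega), ih _ hi, hrule]

theorem not_leftSpreading (h1 : f 0 0 1 = 0) : ¬ LeftSpreading F := by
  rintro ⟨-, hspread⟩
  have hneg : ∀ i < 0, (Pi.single 0 1 : ℤ → Fin 2) i = 0 := fun i hi => Pi.single_eq_of_ne hi.ne 1
  have hx0 : (Pi.single 0 1 : ℤ → Fin 2) 0 ≠ 0 := by simp
  obtain ⟨t, -, ht⟩ := hspread _ (.of_forall_lt hx0 hneg)
  rw [lbound_eq_of_forall_lt hx0 hneg] at ht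
  exact ht.not_ge (lbound_nonneg (iterate_apply_eq_zero_of_lt hF h0 h1 hneg t))

theorem numberLike_apply_and_lbound_apply (h1 : f 0 0 1 = 1) {x : ℤ → Fin 2}
    (hx : NumberLike x) : NumberLike (F x) ∧ lbound (F x) = lbound x - 1 := by
  have hzero : ∀ i < lbound x - 1, F x i = 0 := fun i hi => by
    rw [hF, hx.apply_of_lt_lbound (by omega), hx.apply_of_lt_lbound (by omega),
      hx.apply_of_lt_lbound (by omega), h0]
  have hedge : F x (lbound x - 1) ≠ 0 := by
    rw [hF, hx.apply_of_lt_lbound (by omega), hx.apply_of_lt_lbound (by omega), sub_add_cancel,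
      Fin.eq_one_of_ne_zero _ hx.apply_lbound_ne_zero_s6, h1]
    decide
  exact ⟨.of_forall_lt hedge hzero, lbound_eq_of_forall_lt hedge hzero⟩

theorem numberLike_iterate_and_lbound_iterate (h1 : f 0 0 1 = 1) {x : ℤ → Fin 2}
    (hx : NumberLike x) (t : ℕ) : NumberLike (F^[t] x) ∧ lbound (F^[t] x) = lbound x - t := by
  induction t with
  | zero => simpa using hx
  | succ t ih =>
    obtain ⟨hnl, hlb⟩ := numberLike_apply_and_lbound_apply hF h0 h1 ih.1
    rw [Function.iterate_succ_apply', hlb, ih.2]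
    exact ⟨hnl, by push_cast; ring⟩

theorem leftSpreading_iff : LeftSpreading F ↔ f 0 0 1 = 1 := by
  refine ⟨fun hLS => ?_, fun h1 => ⟨funext fun i => by rw [hF, h0], fun x hx => ⟨1, le_rfl, ?_⟩⟩⟩
  · rcases eq_or_ne (f 0 0 1) 0 with h1 | h1
    · exact absurd hLS (not_leftSpreading hF h0 h1)
    · exact Fin.eq_one_of_ne_zero _ h1
  · rw [(numberLike_iterate_and_lbound_iterate hF h0 h1 hx 1).2]
    omega

theorem tendsto_neg_lbound_iterate_div (h1 : f 0 0 1 = 1) {x : ℤ → Fin 2} (hx : NumberLike x) :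
    Filter.Tendsto (fun t : ℕ => -((lbound (F^[t] x) : ℝ)) / (t : ℝ)) Filter.atTop (nhds 1) := by
  have hlim : Filter.Tendsto (fun t : ℕ => 1 - (lbound x : ℝ) / t) Filter.atTop (nhds 1) := by
    simpa using tendsto_const_nhds.sub (tendsto_const_div_atTop_nhds_zero_nat (lbound x : ℝ))
  refine hlim.congr' ?_
  filter_upwards [Filter.eventually_ne_atTop 0] with t ht
  rw [(numberLike_iterate_and_lbound_iterate hF h0 h1 hx t).2]
  push_cast
  field_simp
  ring

theorem spreadingSpeed_eq_one (h1 : f 0 0 1 = 1) : spreadingSpeed F = 1 := by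
  have : Nonempty {x : ℤ → Fin 2 // NumberLike x} :=
    ⟨⟨Pi.single 0 1, .of_forall_lt (N := 0) (by simp) fun i hi => Pi.single_eq_of_ne hi.ne 1⟩⟩
  simp only [spreadingSpeed, fun x : {x // NumberLike x} =>
    (tendsto_neg_lbound_iterate_div hF h0 h1 x.2).limsup_eq, ciSup_const]

end Elementary

/-- An elementary cellular automaton `F` with local rule `f` (with `f(0,0,0) = 0`)
is left spreading on number-like configurations if and only if `f(0,0,1) = 1`;
and in that case its spreading speed equals `1`. -/
theorem stmt_6 (f : Fin 2 → Fin 2 → Fin 2 → Fin 2)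
    (F : (ℤ → Fin 2) → ℤ → Fin 2)
    (hF : ∀ x i, F x i = f (x (i - 1)) (x i) (x (i + 1)))
    (h0 : f 0 0 0 = 0) :
    (LeftSpreading F ↔ f 0 0 1 = 1) ∧ (f 0 0 1 = 1 → spreadingSpeed F = 1) :=
  ⟨leftSpreading_iff hF h0, spreadingSpeed_eq_one hF h0⟩
end

section
/- Let F: A^Z → A^Z be a left expansive cellular automaton with dimensions (h,d,w) and radius r, and let x ∈ A^Z. Suppose t ≥ 1, N ∈ N, c ∈ Z and K = |A|^{tw} satisfy (h+d)K ≤ tN, and frac_c(F^{it}(x)) = frac_c(x) for all 0 ≤ i ≤ N, where frac_c(y) denotes the right-infinite sequence (y[c+j])_{j∈N}. Then x is eventually periodic. -/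
/-- `F` is a cellular automaton of radius `r`. -/
def HasRadius {A : Type*} (F : (ℤ → A) → ℤ → A) (r : ℕ) : Prop :=
  ∃ f : (Fin (2 * r + 1) → A) → A,
    ∀ x i, F x i = f fun k => x (i - (r : ℤ) + (k.val : ℤ))

/-- A two-sided configuration is eventually periodic (to the right). -/
def EvPeriodicConfig {A : Type*} (x : ℤ → A) : Prop :=
  ∃ p : ℕ, 1 ≤ p ∧ ∃ c : ℤ, ∀ i : ℤ, c ≤ i → x (i + p) = x i

/-!
Expansivity makes the space-time diagram of `x` right of column `c + t r` backward
deterministic: the `t × w` block of the diagram sitting at column `j + 1` determines the block at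
column `j`. Indeed, locality turns `frac_c(F^{it} x) = frac_c(x)` into time-periodicity with period
`t` on that half-plane, for all times up to `t (N + 1) ≥ h + d + t`, so the block contains every
symbol of an `(h, d, w)`-rectangle ending at a suitable time in `[h, h + t)`, and left expansivity
yields the missing symbol. Blocks take finitely many values, so the induced backward map `g`
satisfies `g^a = g^b` for some `a < b`, which makes the sequence of blocks, and hence `x`,
periodic with period `b - a`.
-/

open Function

theorem Function.FactorsThrough.exists_add_period {β : Type*} [Finite β] {W : ℕ → β}
    (hW : W.FactorsThrough fun j => W (j + 1)) : ∃ p, 0 < p ∧ ∀ j, W (j + p) = W j := by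
  set g := extend (fun j => W (j + 1)) W id
  have hstep : ∀ j, g (W (j + 1)) = W j := hW.extend_apply id
  have hg : ∀ m j, g^[m] (W (j + m)) = W j := by
    intro m
    induction m with
    | zero => exact fun _ => rfl
    | succ m ih =>
      intro j
      rw [iterate_succ_apply, ← add_assoc, hstep, ih]
  obtain ⟨a, b, hab, hgab⟩ :=
    Set.finite_univ.exists_lt_map_eq_of_forall_mem (f := fun n => g^[n]) fun _ => Set.mem_univ _
  refine ⟨b - a, Nat.sub_pos_of_lt hab, fun j => ?_⟩
  rw [← hg a (j + (b - a)), show j + (b - a) + a = j + b by omega, hgab, hg]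

theorem Nat.exists_mem_Ico_mod_eq (h : ℕ) {t s : ℕ} (hs : s < t) :
    ∃ S, h ≤ S ∧ S < h + t ∧ S % t = s := by
  have hmod := Nat.mod_lt h (Nat.zero_lt_of_lt hs)
  have hdiv := Nat.div_add_mod h t
  refine ⟨h + (s + (t - h % t)) % t, by omega,
    Nat.add_lt_add_left (Nat.mod_lt _ (Nat.zero_lt_of_lt hs)) h, ?_⟩
  rw [Nat.add_mod_mod, show h + (s + (t - h % t)) = s + t * (h / t) + t by omega,
    Nat.add_mod_right, Nat.add_mul_mod_self_left, Nat.mod_eq_of_lt hs]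

section CellularAutomaton

variable {A : Type*} {F : (ℤ → A) → ℤ → A}

theorem HasRadius.iterate_apply_eq_of_eqOn {r : ℕ} (hr : HasRadius F r) {y₁ y₂ : ℤ → A} {c : ℤ}
    (hy : ∀ p, c ≤ p → y₁ p = y₂ p) (s : ℕ) :
    ∀ p, c + s * r ≤ p → F^[s] y₁ p = F^[s] y₂ p := by
  obtain ⟨f, hf⟩ := hr
  induction s with
  | zero => simpa using hy
  | succ s ih =>
    intro p hp
    rw [Nat.cast_succ, add_one_mul] at hp
    rw [iterate_succ_apply', iterate_succ_apply', hf, hf]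
    congr 1
    funext k
    exact ih _ (by omega)

theorem HasRadius.iterate_apply_eq_iterate_mod {r : ℕ} (hr : HasRadius F r) {x : ℤ → A} {t N : ℕ}
    {c : ℤ} (ht : 0 < t) (hx : ∀ i ≤ N, ∀ j : ℕ, F^[i * t] x (c + j) = x (c + j)) {u : ℕ}
    (hu : u < t * N + t) {p : ℤ} (hp : c + t * r ≤ p) :
    F^[u] x p = F^[u % t] x p := by
  have hquot : u / t ≤ N := Nat.lt_succ_iff.mp <| (Nat.div_lt_iff_lt_mul ht).mpr (by linarith)
  have hagree : ∀ q, c ≤ q → F^[t * (u / t)] x q = x q := fun q hq => by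
    obtain ⟨j, rfl⟩ : ∃ j : ℕ, q = c + j := ⟨(q - c).toNat, by omega⟩
    rw [mul_comm, hx _ hquot]
  have hrem : ((u % t : ℕ) : ℤ) * r ≤ t * r :=
    mul_le_mul_of_nonneg_right (by exact_mod_cast (Nat.mod_lt u ht).le) (by positivity)
  calc F^[u] x p = F^[u % t] (F^[t * (u / t)] x) p := by rw [← iterate_add_apply, Nat.mod_add_div]
    _ = F^[u % t] x p := hr.iterate_apply_eq_of_eqOn hagree _ p (by linarith)

variable (F) in
def spaceTimeBlock (x : ℤ → A) (t w : ℕ) (c : ℤ) (j : ℕ) : Fin t → Fin w → A :=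
  fun s a => F^[s] x (c + j + a)

theorem LeftExpansive.spaceTimeBlock_eq_of_succ {h d w t : ℕ} (hexp : LeftExpansive F h d w)
    {x : ℤ → A} {c : ℤ} (hper : ∀ u < h + d + t, ∀ p, c ≤ p → F^[u] x p = F^[u % t] x p)
    {j j' : ℕ} (hjj : spaceTimeBlock F x t w c (j + 1) = spaceTimeBlock F x t w c (j' + 1)) :
    spaceTimeBlock F x t w c j = spaceTimeBlock F x t w c j' := by
  funext s a
  have hcol : ∀ u < h + d + t, ∀ a < w,
      F^[u] x (c + (j + 1 : ℕ) + a) = F^[u] x (c + (j' + 1 : ℕ) + a) := fun u hu a ha => by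
    have ht : 0 < t := s.pos
    rw [hper u hu _ (by omega), hper u hu _ (by omega)]
    exact congrFun₂ hjj ⟨u % t, Nat.mod_lt u ht⟩ ⟨a, ha⟩
  obtain ⟨_ | a, ha⟩ := a
  · obtain ⟨S, hhS, hSt, hSs⟩ := Nat.exists_mem_Ico_mod_eq h s.isLt
    have key := hexp x x (c + (j + 1 : ℕ)) (c + (j' + 1 : ℕ)) S S hhS hhS
      fun a' b ha' hdb hbh => hcol _ (by omega) a' ha'
    rw [hper S (by omega) _ (by omega), hper S (by omega) _ (by omega), hSs] at key
    simpa [spaceTimeBlock, ← add_assoc] using key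
  · simpa [spaceTimeBlock, add_assoc, add_comm, add_left_comm] using
      hcol s (by omega) a (by omega)

end CellularAutomaton

/-- Let `F` be a left expansive CA with dimensions `(h,d,w)` and radius `r`, and let
`x ∈ A^ℤ`. If `t ≥ 1`, `N`, `c` and `K = |A|^{tw}` satisfy `(h+d)K ≤ tN` and
`frac_c(F^{it}(x)) = frac_c(x)` for all `0 ≤ i ≤ N`, then `x` is eventually periodic. -/
theorem stmt_9 {A : Type*} [Fintype A] (F : (ℤ → A) → ℤ → A)
    (h d w r : ℕ) (hw : 1 ≤ w) (hexp : LeftExpansive F h d w) (hr : HasRadius F r)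
    (x : ℤ → A) (t N : ℕ) (ht : 1 ≤ t) (c : ℤ)
    (hK : (h + d) * Fintype.card A ^ (t * w) ≤ t * N)
    (hfrac : ∀ i ≤ N, ∀ j : ℕ, F^[i * t] x (c + (j : ℤ)) = x (c + (j : ℤ))) :
    EvPeriodicConfig x := by
  have : Nonempty A := ⟨x 0⟩
  have hdN : h + d ≤ t * N :=
    (Nat.le_mul_of_pos_right _ (Nat.pow_pos Fintype.card_pos)).trans hK
  obtain ⟨p, hp, hperiodic⟩ := FactorsThrough.exists_add_period fun j j' =>
    hexp.spaceTimeBlock_eq_of_succ (x := x) (t := t) (c := c + t * r) fun u hu _ hq =>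
      hr.iterate_apply_eq_iterate_mod ht hfrac (by omega) hq
  refine ⟨p, hp, c + t * r, fun i hi => ?_⟩
  obtain ⟨j, rfl⟩ : ∃ j : ℕ, i = c + t * r + j := ⟨(i - (c + t * r)).toNat, by omega⟩
  simpa [spaceTimeBlock, add_assoc] using congrFun₂ (hperiodic j) ⟨0, ht⟩ ⟨0, hw⟩
end

section
/- Let F: A^Z → A^Z be a CA with memory m that is left expansive with dimensions (e,e,w), and set c = m(e-1). If x ∈ A^Z and t ∈ N are such that frac(x) and frac(F^t(x)) are both p-periodic, then frac_c(F^i(x)) is p-periodic for every 0 ≤ i ≤ t. -/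
/-- `F` is a cellular automaton with memory `m` (for some anticipation `n`). -/
def HasMemory {A : Type*} (F : (ℤ → A) → ℤ → A) (m : ℕ) : Prop :=
  ∃ (n : ℕ) (f : (Fin (m + n + 1) → A) → A),
    ∀ x i, F x i = f fun k => x (i - (m : ℤ) + (k.val : ℤ))

/-- `PeriodicFrom p c y`: the one-sided sequence `frac_c(y)` is `p`-periodic. -/
def PeriodicFrom {A : Type*} (p : ℕ) (c : ℤ) (y : ℤ → A) : Prop :=
  ∀ q, c ≤ q → y (q + p) = y q

namespace PeriodicFrom

variable {A : Type*} {F : (ℤ → A) → ℤ → A} {m p : ℕ} {c : ℤ} {y : ℤ → A}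

lemma zero_iff : PeriodicFrom p 0 y ↔ ∀ j : ℕ, y (j + p) = y j :=
  ⟨fun h j => h j j.cast_nonneg, fun h q hq => by lift q to ℕ using hq; exact h q⟩

lemma mono {c' : ℤ} (h : PeriodicFrom p c y) (hc : c ≤ c') : PeriodicFrom p c' y :=
  fun q hq => h q (hc.trans hq)

lemma sub_one (h : PeriodicFrom p c y) (hc : y (c - 1 + p) = y (c - 1)) :
    PeriodicFrom p (c - 1) y := by
  intro q hq
  rcases hq.eq_or_lt with rfl | hq
  · exact hc
  · exact h q (by omega)

lemma map (hF : HasMemory F m) (h : PeriodicFrom p c y) : PeriodicFrom p (c + m) (F y) := by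
  obtain ⟨n, f, hf⟩ := hF
  intro q hq
  rw [hf, hf]
  congr 1
  funext k
  rw [show q + p - m + k = q - m + k + p by ring]
  exact h _ (by omega)

lemma iterate (hF : HasMemory F m) (h : PeriodicFrom p c y) (i : ℕ) :
    PeriodicFrom p (c + (m * i : ℕ)) (F^[i] y) := by
  induction i with
  | zero => simpa using h
  | succ i ih =>
    rw [Function.iterate_succ_apply']
    exact (ih.map hF).mono (by push_cast; linarith)

lemma iterate_of_lt (hF : HasMemory F m) (h : PeriodicFrom p 0 y) {e k : ℕ} (hk : k < e) :
    PeriodicFrom p (m * (e - 1) : ℕ) (F^[k] y) :=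
  (h.iterate hF k).mono <| by
    rw [zero_add]
    exact_mod_cast Nat.mul_le_mul_left m (Nat.le_sub_one_of_lt hk)

end PeriodicFrom

lemma LeftExpansive.apply_sub_one_add_eq {A : Type*} {F : (ℤ → A) → ℤ → A} {e w : ℕ}
    (hexp : LeftExpansive F e e w) (x : ℤ → A) (s q : ℤ) {i : ℕ} (hi : e ≤ i)
    (h : ∀ a < w, ∀ J : ℕ, i ≤ J + e → J ≤ i + e → F^[J] x (q + a + s) = F^[J] x (q + a)) :
    F^[i] x (q - 1 + s) = F^[i] x (q - 1) := by
  have key := hexp x x (q + s) q i i hi hi fun a b ha hb₁ hb₂ => by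
    rw [add_right_comm]
    exact h a ha _ (by omega) (by omega)
  rwa [sub_add_eq_add_sub]

section

variable {A : Type*} {F : (ℤ → A) → ℤ → A} {m e w : ℕ} {x : ℤ → A} {t p : ℕ}

lemma LeftExpansive.periodicFrom_sub_one (hF : HasMemory F m) (hexp : LeftExpansive F e e w)
    (hx : PeriodicFrom p 0 x) (hxt : PeriodicFrom p 0 (F^[t] x)) {q : ℤ}
    (hq : ((m * (e - 1) : ℕ) : ℤ) < q) (hS : ∀ i ≤ t, PeriodicFrom p q (F^[i] x)) :
    ∀ i ≤ t, PeriodicFrom p (q - 1) (F^[i] x) := by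
  intro i hi
  refine (hS i hi).sub_one ?_
  rcases lt_or_ge i e with hie | hie
  · exact hx.iterate_of_lt hF hie _ (by omega)
  rcases hi.eq_or_lt with rfl | hit
  · exact hxt _ (by omega)
  refine hexp.apply_sub_one_add_eq x p q hie fun a _ J hJ₁ hJ₂ => ?_
  rcases le_or_gt J t with hJt | hJt
  · exact hS J hJt _ (by omega)
  · rw [show J = (J - t) + t by omega, Function.iterate_add_apply]
    exact hxt.iterate_of_lt hF (e := e) (by omega) _ (by omega)

end

theorem stmt_11_general {A : Type*} (F : (ℤ → A) → ℤ → A) (m : ℕ) (hmem : HasMemory F m)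
    (e w : ℕ) (hexp : LeftExpansive F e e w)
    (x : ℤ → A) (t p : ℕ)
    (hx : ∀ j : ℕ, x ((j : ℤ) + (p : ℤ)) = x (j : ℤ))
    (hxt : ∀ j : ℕ, F^[t] x ((j : ℤ) + (p : ℤ)) = F^[t] x (j : ℤ)) :
    ∀ i ≤ t, ∀ j : ℕ,
      F^[i] x ((m * (e - 1) : ℕ) + (j : ℤ) + (p : ℤ)) =
        F^[i] x ((m * (e - 1) : ℕ) + (j : ℤ)) := by
  rw [← PeriodicFrom.zero_iff] at hx hxt
  set c : ℤ := ((m * (e - 1) : ℕ) : ℤ)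
  have hS : ∀ q, q ≤ c + (m * t : ℕ) → c ≤ q → ∀ i ≤ t, PeriodicFrom p q (F^[i] x) := by
    refine Int.leInductionDown (fun _ i hi => (hx.iterate hmem i).mono ?_) ?_
    · have hmi := Nat.mul_le_mul_left m hi
      omega
    · intro q _ ih hq
      exact hexp.periodicFrom_sub_one hmem hx hxt (by omega) (ih (by omega))
  intro i hi j
  exact hS c (by omega) le_rfl i hi _ (by omega)

/-- Let `F` be a CA with memory `m`, left expansive with dimensions `(e,e,w)`, and set
`c = m(e-1)`. If `frac(x)` and `frac(F^t(x))` are both `p`-periodic, then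
`frac_c(F^i(x))` is `p`-periodic for every `0 ≤ i ≤ t`. -/
theorem stmt_11 {A : Type*} (F : (ℤ → A) → ℤ → A) (m : ℕ) (hmem : HasMemory F m)
    (e w : ℕ) (hw : 1 ≤ w) (hexp : LeftExpansive F e e w)
    (x : ℤ → A) (t p : ℕ) (hp : 1 ≤ p)
    (hx : ∀ j : ℕ, x ((j : ℤ) + (p : ℤ)) = x (j : ℤ))
    (hxt : ∀ j : ℕ, F^[t] x ((j : ℤ) + (p : ℤ)) = F^[t] x (j : ℤ)) :
    ∀ i ≤ t, ∀ j : ℕ,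
      F^[i] x ((m * (e - 1) : ℕ) + (j : ℤ) + (p : ℤ)) =
        F^[i] x ((m * (e - 1) : ℕ) + (j : ℤ)) :=
  stmt_11_general F m hmem e w hexp x t p hx hxt
end

section
/- Let F: A^Z → A^Z be a cellular automaton with radius r and let x ∈ A^Z be such that the sequence (frac(F^t(x)))_{t∈N} has only finitely many limit points in A^N (with respect to the product topology). Then for every w ∈ N there exists i ∈ N such that the trace tr_{[i,i+w]}(x) = (F^t(x)[i..i+w])_{t∈N} is eventually periodic. -/
/-- `z` is a limit point of the sequence `u` of one-sided sequences, in the product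
(prodiscrete) topology on `A^ℕ`: some subsequence of `u` converges to `z`, i.e. agrees
with `z` on arbitrarily long prefixes from some point on. -/
def LimitPoint {A : Type*} (u : ℕ → ℕ → A) (z : ℕ → A) : Prop :=
  ∃ φ : ℕ → ℕ, StrictMono φ ∧ ∀ n : ℕ, ∃ N : ℕ, ∀ k, N ≤ k → ∀ j ≤ n, u (φ k) j = z j

/-!
Let `Z` be the finite set of limit points of `frac(F^t(x))`. By compactness the configurations
`frac(F^t(x))` are eventually close to `Z`, so each can be tracked by a point `ζ t ∈ Z` agreeing
with it on a prefix whose length tends to infinity. Consecutive pairs `(ζ t, ζ (t + 1))` that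
occur infinitely often are related by the local rule on `[r, ∞)`, since they are approximated by
actual space-time diagram rows. Finiteness of `Z` gives a position `s₀` beyond which any two
eventually equal points of `Z` agree, so the restriction of `ζ t` to `[s₀, ∞)` evolves
deterministically through finitely many states and is eventually periodic; on the window
`[s₀, s₀ + w]` it coincides with the trace for large `t`.
-/

open Filter Set

section

variable {A : Type*}

/-- Only positions `a ≥ r` are constrained: their whole neighbourhood lies in `ℕ`. -/
def LocalStep (r : ℕ) (f : (Fin (2 * r + 1) → A) → A) (y y' : ℕ → A) : Prop :=
  ∀ a, r ≤ a → y' a = f fun k => y (a - r + k)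

lemma localStep_restrict_nat {F : (ℤ → A) → ℤ → A} {r : ℕ} {f : (Fin (2 * r + 1) → A) → A}
    (hf : ∀ x i, F x i = f fun k => x (i - (r : ℤ) + (k.val : ℤ))) (y : ℤ → A) :
    LocalStep r f (fun j : ℕ => y j) (fun j : ℕ => F y j) := by
  intro a ha
  simp only [hf]
  congr
  funext k
  push_cast [Nat.cast_sub ha]
  ring_nf

lemma LocalStep.eqOn_Ici {r : ℕ} {f : (Fin (2 * r + 1) → A) → A} {y y' z z' : ℕ → A}
    (hy : LocalStep r f y y') (hz : LocalStep r f z z') {s : ℕ} (h : EqOn y z (Ici s)) :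
    EqOn y' z' (Ici (s + r)) := by
  intro a ha
  rw [mem_Ici] at ha
  rw [hy a (by omega), hz a (by omega)]
  congr
  funext k
  exact h (show s ≤ a - r + k by omega)

lemma exists_limitPoint [Finite A] (v : ℕ → ℕ → A) : ∃ z, LimitPoint v z := by
  let _ : TopologicalSpace A := ⊥
  have : DiscreteTopology A := ⟨rfl⟩
  obtain ⟨z, -, φ, hφ, hconv⟩ :=
    (isCompact_univ (X := ℕ → A)).tendsto_subseq (x := v) fun _ => mem_univ _
  refine ⟨z, φ, hφ, fun n => ?_⟩
  have hcoord : ∀ j, ∀ᶠ k in atTop, v (φ k) j = z j := fun j => by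
    simpa [nhds_discrete] using tendsto_pi_nhds.mp hconv j
  obtain ⟨N, hN⟩ := eventually_atTop.mp ((Finset.eventually_all (Finset.range (n + 1))).mpr
    fun j _ => hcoord j)
  exact ⟨N, fun k hk j hj => hN k hk j (Finset.mem_range.mpr (Nat.lt_succ_of_le hj))⟩

lemma eventually_exists_limitPoint_eqOn [Finite A] (u : ℕ → ℕ → A) (n : ℕ) :
    ∀ᶠ t in atTop, ∃ z, LimitPoint u z ∧ EqOn (u t) z (Iic n) := by
  by_contra hcon
  obtain ⟨ψ, hψ, hψu⟩ := extraction_of_frequently_atTop (not_eventually.mp hcon)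
  obtain ⟨z, φ, hφ, hz⟩ := exists_limitPoint fun k => u (ψ k)
  obtain ⟨N, hN⟩ := hz n
  exact hψu (φ N) ⟨z, ⟨ψ ∘ φ, hψ.comp hφ, hz⟩, fun j hj => hN N le_rfl j hj⟩

lemma Set.Finite.exists_witness_le {α : Type*} {S : Set α} (hS : S.Finite)
    (P : α → ℕ → Prop) : ∃ N, ∀ x ∈ S, (∃ n, P x n) → ∃ n ≤ N, P x n := by
  classical
  obtain ⟨N, hN⟩ := (hS.image fun x => if h : ∃ n, P x n then h.choose else 0).bddAbove
  refine ⟨N, fun x hx h => ⟨h.choose, ?_, h.choose_spec⟩⟩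
  simpa [h] using hN (mem_image_of_mem _ hx)

lemma Set.Finite.exists_eq_of_eqOn_Iic {S : Set (ℕ → A)} (hS : S.Finite) :
    ∃ N, ∀ z ∈ S, ∀ z' ∈ S, EqOn z z' (Iic N) → z = z' := by
  obtain ⟨N, hN⟩ := (hS.prod hS).exists_witness_le fun p j => p.1 j ≠ p.2 j
  refine ⟨N, fun z hz z' hz' hzz' => ?_⟩
  by_contra hne
  obtain ⟨j, hj, hdiff⟩ := hN (z, z') ⟨hz, hz'⟩ (Function.ne_iff.mp hne)
  exact hdiff (hzz' (mem_Iic.mpr hj))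

lemma Set.Finite.exists_eqOn_Ici_of_eventuallyEq {S : Set (ℕ → A)} (hS : S.Finite) :
    ∃ s, ∀ z ∈ S, ∀ z' ∈ S, z =ᶠ[atTop] z' → EqOn z z' (Ici s) := by
  obtain ⟨N, hN⟩ := (hS.prod hS).exists_witness_le fun p s => EqOn p.1 p.2 (Ici s)
  refine ⟨N, fun z hz z' hz' h => ?_⟩
  obtain ⟨s, hsN, hs⟩ := hN (z, z') ⟨hz, hz'⟩ (by simpa [EqOn] using eventually_atTop.mp h)
  exact hs.mono (Ici_subset_Ici.mpr hsN)

lemma exists_limitPoint_approx [Finite A] {u : ℕ → ℕ → A}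
    (hZ : {z | LimitPoint u z}.Finite) :
    ∃ ζ : ℕ → ℕ → A, (∀ t, LimitPoint u (ζ t)) ∧
      ∀ n, ∀ᶠ t in atTop, EqOn (u t) (ζ t) (Iic n) := by
  obtain ⟨N, hN⟩ := hZ.exists_eq_of_eqOn_Iic
  obtain ⟨z₀, hz₀⟩ := exists_limitPoint u
  -- `ζ t` is the point of `Z` matching `u t` on `[0, N]`, which is unique when it exists
  have hchoice : ∀ t, ∃ z, LimitPoint u z ∧
      ((∃ z', LimitPoint u z' ∧ EqOn (u t) z' (Iic N)) → EqOn (u t) z (Iic N)) := by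
    intro t
    by_cases h : ∃ z', LimitPoint u z' ∧ EqOn (u t) z' (Iic N)
    · obtain ⟨z', hz', hmatch⟩ := h
      exact ⟨z', hz', fun _ => hmatch⟩
    · exact ⟨z₀, hz₀, fun h' => absurd h' h⟩
  choose ζ hζ hζN using hchoice
  refine ⟨ζ, hζ, fun n => ?_⟩
  filter_upwards [eventually_exists_limitPoint_eqOn u (max n N)] with t ⟨z, hz, hzt⟩
  have hzN : EqOn (u t) z (Iic N) := hzt.mono (Iic_subset_Iic.mpr (le_max_right _ _))
  obtain rfl : ζ t = z := hN _ (hζ t) _ hz ((hζN t ⟨z, hz, hzN⟩).symm.trans hzN)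
  exact hzt.mono (Iic_subset_Iic.mpr (le_max_left _ _))

lemma eventually_frequently_eq_of_finite_range {β : Type*} {q : ℕ → β}
    (hq : (range q).Finite) : ∀ᶠ t in atTop, ∃ᶠ s in atTop, q s = q t := by
  rw [← Nat.cofinite_eq_atTop, eventually_cofinite]
  simp only [frequently_cofinite_iff_infinite, not_infinite]
  exact ((hq.subset inter_subset_left).preimage' (s := range q ∩ {b | (q ⁻¹' {b}).Finite})
    fun b hb => hb.2).subset fun t ht => ⟨⟨t, rfl⟩, ht⟩

lemma eventually_localStep_of_approx {r : ℕ} {f : (Fin (2 * r + 1) → A) → A}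
    {u ζ : ℕ → ℕ → A} (hu : ∀ t, LocalStep r f (u t) (u (t + 1)))
    (hζ : ∀ n, ∀ᶠ t in atTop, EqOn (u t) (ζ t) (Iic n)) (hfin : (range ζ).Finite) :
    ∀ᶠ t in atTop, LocalStep r f (ζ t) (ζ (t + 1)) := by
  have hpairs : (range fun t => (ζ t, ζ (t + 1))).Finite :=
    (hfin.prod hfin).subset (range_subset_iff.mpr fun t => ⟨⟨t, rfl⟩, ⟨t + 1, rfl⟩⟩)
  filter_upwards [eventually_frequently_eq_of_finite_range hpairs] with t ht a ha
  obtain ⟨s, hst, hs, hs'⟩ := (ht.and_eventually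
    ((hζ (a + r)).and ((tendsto_add_atTop_nat 1).eventually (hζ a)))).exists
  obtain ⟨hζs, hζs'⟩ := Prod.mk.injEq _ _ _ _ ▸ hst
  rw [← hζs, ← hζs', ← hs' (mem_Iic.mpr le_rfl), hu s a ha]
  congr
  funext k
  exact hs (mem_Iic.mpr (by omega))

lemma exists_periodic_of_step {α : Type*} {R : α → α → Prop} (hR : ∀ a, R a a) {c : ℕ → α}
    (hc : (range c).Finite) {T : ℕ}
    (hstep : ∀ t t', T ≤ t → T ≤ t' → R (c t) (c t') → R (c (t + 1)) (c (t' + 1))) :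
    ∃ p, 1 ≤ p ∧ ∃ t₀, ∀ t, t₀ ≤ t → R (c (t + p)) (c t) := by
  obtain ⟨t₁, t₂, hlt, heq⟩ :=
    hc.exists_lt_map_eq_of_forall_mem (f := fun n => c (T + n)) fun n => mem_range_self (T + n)
  have hshift : ∀ k, R (c (T + t₂ + k)) (c (T + t₁ + k)) := by
    intro k
    induction k with
    | zero => exact heq ▸ hR _
    | succ k ih => exact hstep (T + t₂ + k) (T + t₁ + k) (by omega) (by omega) ih
  refine ⟨t₂ - t₁, by omega, T + t₁, fun t ht => ?_⟩
  obtain ⟨k, rfl⟩ := Nat.exists_eq_add_of_le ht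
  have := hshift k
  rwa [show T + t₁ + k + (t₂ - t₁) = T + t₂ + k by omega]

theorem exists_evPeriodicSeq_window [Finite A] {r : ℕ}
    {f : (Fin (2 * r + 1) → A) → A} {u : ℕ → ℕ → A} (hu : ∀ t, LocalStep r f (u t) (u (t + 1)))
    (hZ : {z | LimitPoint u z}.Finite) (w : ℕ) :
    ∃ i, EvPeriodicSeq fun t => fun k : Fin (w + 1) => u t (i + k) := by
  obtain ⟨ζ, hζZ, hζ⟩ := exists_limitPoint_approx hZ
  have hrange : (range ζ).Finite := hZ.subset (range_subset_iff.mpr hζZ)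
  obtain ⟨s₀, hs₀⟩ := hZ.exists_eqOn_Ici_of_eventuallyEq
  obtain ⟨T, hT⟩ := eventually_atTop.mp (eventually_localStep_of_approx hu hζ hrange)
  obtain ⟨p, hp, t₀, hper⟩ := exists_periodic_of_step (R := fun z z' => EqOn z z' (Ici s₀))
    (fun z => eqOn_refl z _) hrange (T := T) fun t t' ht ht' h =>
      hs₀ _ (hζZ _) _ (hζZ _) <| eventually_atTop.mpr
        ⟨s₀ + r, fun a ha => (hT t ht).eqOn_Ici (hT t' ht') h (mem_Ici.mpr ha)⟩
  obtain ⟨T', hT'⟩ := eventually_atTop.mp (hζ (s₀ + w))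
  refine ⟨s₀, p, hp, max t₀ T', fun t ht => funext fun k => ?_⟩
  have hk : s₀ + k ∈ Iic (s₀ + w) := mem_Iic.mpr (by omega)
  calc u (t + p) (s₀ + k) = ζ (t + p) (s₀ + k) := hT' (t + p) (by omega) hk
    _ = ζ t (s₀ + k) := hper t (by omega) (mem_Ici.mpr (by omega))
    _ = u t (s₀ + k) := (hT' t (by omega) hk).symm

end

/-- If `F` is a CA of radius `r` and the sequence `(frac(F^t(x)))_t` has only finitely
many limit points in `A^ℕ`, then for every `w` there is an `i ∈ ℕ` such that the trace
of `x` over `[i, i+w]` is eventually periodic. -/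
theorem stmt_13 {A : Type*} [Fintype A] (F : (ℤ → A) → ℤ → A)
    (r : ℕ) (hr : HasRadius F r) (x : ℤ → A)
    (hlim : {z : ℕ → A | LimitPoint (fun t j => F^[t] x (j : ℤ)) z}.Finite) :
    ∀ w : ℕ, ∃ i : ℕ,
      EvPeriodicSeq (fun t => fun k : Fin (w + 1) => F^[t] x ((i : ℤ) + (k.val : ℤ))) := by
  intro w
  obtain ⟨f, hf⟩ := hr
  have hu : ∀ t, LocalStep r f (fun j : ℕ => F^[t] x j) (fun j : ℕ => F^[t + 1] x j) := by
    intro t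
    simpa only [Function.iterate_succ_apply'] using localStep_restrict_nat hf (F^[t] x)
  obtain ⟨i, p, hp, c, hc⟩ := exists_evPeriodicSeq_window hu hlim w
  exact ⟨i, p, hp, c, fun t ht => by simpa using hc t ht⟩
end

section
/- The fractional multiplication automaton Mul_{p/q,pq} (p > q > 1 coprime) is left spreading on number-like configurations with spreading speed log_{pq}(p/q). In particular, for every number-like x, limsup_{t→∞} (-lbound(Mul_{p/q,pq}^t(x)))/t ≤ log_{pq}(p/q), with equality attained in the supremum over number-like x. -/
/-- The left edge of a configuration over `{0,...,m-1}`. -/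
noncomputable def lboundF {m : ℕ} (x : ℤ → Fin m) : ℤ :=
  sInf {N : ℤ | (x N : ℕ) ≠ 0}

/-- `F` is left spreading on number-like configurations over `{0,...,m-1}`. -/
def LeftSpreadingF {m : ℕ} (F : (ℤ → Fin m) → ℤ → Fin m) : Prop :=
  (∀ x : ℤ → Fin m, (∀ i, (x i : ℕ) = 0) → ∀ i, (F x i : ℕ) = 0) ∧
    ∀ x, NumberLikeF x → ∃ t : ℕ, 1 ≤ t ∧ lboundF (F^[t] x) < lboundF x

/-- The spreading speed of `F`: `sup` over number-like `x` of
`limsup_t (-lbound(F^t(x)))/t`. -/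
noncomputable def spreadingSpeedF {m : ℕ} (F : (ℤ → Fin m) → ℤ → Fin m) : ℝ :=
  ⨆ x : {x : ℤ → Fin m // NumberLikeF x},
    Filter.limsup (fun t : ℕ => -((lboundF (F^[t] x.1) : ℝ)) / (t : ℝ)) Filter.atTop

/-! Read a number-like configuration `x` as the positive real `realN (p * q) x`. One step of
`Mul_{p/q,pq}` multiplies it by `p / q`, and `-lboundF x` is `logb_{pq} (realN x)` up to an error
in `[0, 1]`. Hence `-lboundF (F^[t] x) = t · logb_{pq} (p / q) + O(1)`, so `-lboundF (F^[t] x) / t`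
converges to `logb_{pq} (p / q) > 0` for every number-like `x`. -/

open Filter Topology

noncomputable def realOfDigits (n : ℝ) (f : ℤ → ℝ) : ℝ :=
  ∑' i, f i * n ^ (-i - 1)

lemma realN_eq_realOfDigits (n : ℕ) {m : ℕ} (x : ℤ → Fin m) :
    realN n x = realOfDigits n (fun i => ((x i : ℕ) : ℝ)) := rfl

lemma hasSum_nat_add_iff_of_eq_zero_below {f : ℤ → ℝ} {N : ℤ} (hN : ∀ i < N, f i = 0) {a : ℝ} :
    HasSum (fun k : ℕ => f (N + k)) a ↔ HasSum f a := by
  refine Function.Injective.hasSum_iff (fun a b h => by simpa using h) fun i hi => hN i ?_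
  by_contra! h
  exact hi ⟨(i - N).toNat, by simp; omega⟩

section RealOfDigits

variable {n : ℝ} {f g : ℤ → ℝ} {N : ℤ}

lemma hasSum_tail_geometric (hn : 1 < n) (N : ℤ) :
    HasSum (fun k : ℕ => (n - 1) * n ^ (-(N + k) - 1)) (n ^ (-N)) := by
  have hn0 : n ≠ 0 := by positivity
  have hterm : ∀ k : ℕ, (n - 1) * n ^ (-(N + k) - 1) = (n - 1) * n ^ (-N - 1) * n⁻¹ ^ k := by
    intro k
    rw [mul_assoc, inv_pow, ← zpow_natCast, ← zpow_neg, ← zpow_add₀ hn0]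
    ring_nf
  have hsum : (n - 1) * n ^ (-N - 1) * (1 - n⁻¹)⁻¹ = n ^ (-N) := by
    have hn1 : n - 1 ≠ 0 := by linarith
    rw [zpow_sub_one₀ hn0, inv_eq_one_div, one_sub_div hn0]
    field_simp
  simp_rw [hterm, ← hsum]
  exact (hasSum_geometric_of_lt_one (by positivity) (inv_lt_one_of_one_lt₀ hn)).mul_left _

lemma summable_digits (hn : 1 < n) (h0 : ∀ i, 0 ≤ f i) (hf : ∀ i, f i ≤ n - 1)
    (hN : ∀ i < N, f i = 0) : Summable fun i => f i * n ^ (-i - 1) := by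
  have hN' : ∀ i < N, f i * n ^ (-i - 1) = 0 := fun i hi => by rw [hN i hi, zero_mul]
  refine ((hasSum_nat_add_iff_of_eq_zero_below hN').1 (Summable.of_nonneg_of_le (fun k => ?_)
    (fun k => ?_) (hasSum_tail_geometric hn N).summable).hasSum).summable
  · have := h0 (N + k); positivity
  · exact mul_le_mul_of_nonneg_right (hf _) (by positivity)

lemma realOfDigits_le (hn : 1 < n) (h0 : ∀ i, 0 ≤ f i) (hf : ∀ i, f i ≤ n - 1)
    (hN : ∀ i < N, f i = 0) : realOfDigits n f ≤ n ^ (-N) := by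
  have hN' : ∀ i < N, f i * n ^ (-i - 1) = 0 := fun i hi => by rw [hN i hi, zero_mul]
  refine hasSum_le (fun k => ?_)
    ((hasSum_nat_add_iff_of_eq_zero_below hN').2 (summable_digits hn h0 hf hN).hasSum)
    (hasSum_tail_geometric hn N)
  exact mul_le_mul_of_nonneg_right (hf _) (by positivity)

lemma zpow_le_realOfDigits (hn : 1 < n) (h0 : ∀ i, 0 ≤ f i)
    (hs : Summable fun i => f i * n ^ (-i - 1)) {L : ℤ} (hL : 1 ≤ f L) :
    n ^ (-L - 1) ≤ realOfDigits n f :=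
  calc n ^ (-L - 1) ≤ f L * n ^ (-L - 1) := le_mul_of_one_le_left (by positivity) hL
    _ ≤ realOfDigits n f :=
      hs.le_tsum L fun i _ => mul_nonneg (h0 i) (by positivity)

lemma realOfDigits_add (hf : Summable fun i => f i * n ^ (-i - 1))
    (hg : Summable fun i => g i * n ^ (-i - 1)) :
    realOfDigits n (fun i => f i + g i) = realOfDigits n f + realOfDigits n g := by
  simp only [realOfDigits, add_mul]
  exact hf.tsum_add hg

lemma realOfDigits_const_mul (c : ℝ) :
    realOfDigits n (fun i => c * f i) = c * realOfDigits n f := by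
  simp only [realOfDigits, mul_assoc]
  exact tsum_mul_left

lemma realOfDigits_comp_add (hn : n ≠ 0) (k : ℤ) :
    realOfDigits n (fun i => f (i + k)) = n ^ k * realOfDigits n f := by
  rw [realOfDigits, realOfDigits, ← tsum_mul_left,
    ← (Equiv.addRight k).tsum_eq fun j => n ^ k * (f j * n ^ (-j - 1))]
  refine tsum_congr fun i => ?_
  simp only [Equiv.coe_addRight]
  rw [mul_left_comm, ← zpow_add₀ hn]
  ring_nf

end RealOfDigits

section Configurations

variable {n : ℕ}

lemma lboundF_spec {m : ℕ} {x : ℤ → Fin m} (hx : NumberLikeF x) :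
    (∀ i < lboundF x, (x i : ℕ) = 0) ∧ (x (lboundF x) : ℕ) ≠ 0 := by
  obtain ⟨hne, N, hN⟩ := hx
  have hbdd : BddBelow {i : ℤ | (x i : ℕ) ≠ 0} :=
    ⟨N, fun i hi => by by_contra! h; exact hi (hN i h)⟩
  exact ⟨fun i hi => by by_contra h; exact (csInf_le hbdd h).not_gt hi,
    Int.csInf_mem hne hbdd⟩

lemma digit_le (x : ℤ → Fin n) (i : ℤ) : ((x i : ℕ) : ℝ) ≤ n - 1 := by
  have := (x i).isLt
  rw [le_sub_iff_add_le]
  exact_mod_cast this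

lemma summable_config (hn : 1 < n) {x : ℤ → Fin n} {N : ℤ} (hN : ∀ i < N, (x i : ℕ) = 0) :
    Summable fun i => ((x i : ℕ) : ℝ) * (n : ℝ) ^ (-i - 1) :=
  summable_digits (N := N) (by exact_mod_cast hn) (fun _ => by positivity) (digit_le x)
    fun i hi => by simp [hN i hi]

lemma zpow_le_realN (hn : 1 < n) {x : ℤ → Fin n} (hx : NumberLikeF x) :
    (n : ℝ) ^ (-lboundF x - 1) ≤ realN n x := by
  obtain ⟨hzero, hL⟩ := lboundF_spec hx
  exact zpow_le_realOfDigits (by exact_mod_cast hn) (fun _ => by positivity)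
    (summable_config hn hzero) (by exact_mod_cast Nat.one_le_iff_ne_zero.2 hL)

lemma realN_pos (hn : 1 < n) {x : ℤ → Fin n} (hx : NumberLikeF x) : 0 < realN n x :=
  lt_of_lt_of_le (by positivity) (zpow_le_realN hn hx)

lemma exists_ne_zero_of_realN_ne_zero {m : ℕ} {x : ℤ → Fin m} (h : realN n x ≠ 0) :
    ∃ i, (x i : ℕ) ≠ 0 := by
  by_contra! hx
  exact h (by simp [realN, hx])

lemma logb_realN_mem_Icc (hn : 1 < n) {x : ℤ → Fin n} (hx : NumberLikeF x) :
    Real.logb n (realN n x) ∈ Set.Icc (-lboundF x - 1 : ℝ) (-lboundF x) := by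
  have hn' : (1 : ℝ) < n := by exact_mod_cast hn
  have hup : realN n x ≤ (n : ℝ) ^ (-lboundF x) :=
    realOfDigits_le hn' (fun _ => by positivity) (digit_le x)
      fun i hi => by simp [(lboundF_spec hx).1 i hi]
  have hlogb (z : ℤ) : Real.logb n ((n : ℝ) ^ z) = z := by
    rw [← Real.rpow_intCast, Real.logb_rpow (by positivity) hn'.ne']
  constructor
  · simpa [hlogb] using Real.logb_le_logb_of_le hn' (by positivity) (zpow_le_realN hn hx)
  · simpa [hlogb] using Real.logb_le_logb_of_le hn' (realN_pos hn hx) hup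

end Configurations

section Multiplication

variable {p q : ℕ} (hn : 0 < p * q)

lemma val_mulP (x : ℤ → Fin (p * q)) (i : ℤ) :
    (mulP p q hn x i : ℕ) = (x i : ℕ) % q * p + (x (i + 1) : ℕ) / q := by
  have hq : 0 < q := Nat.pos_of_mul_pos_left hn
  refine Nat.mod_eq_of_lt ?_
  have hmod : (x i : ℕ) % q + 1 ≤ q := Nat.mod_lt _ hq
  have hdiv : (x (i + 1) : ℕ) / q < p := Nat.div_lt_of_lt_mul (mul_comm p q ▸ (x (i + 1)).isLt)
  calc (x i : ℕ) % q * p + (x (i + 1) : ℕ) / q < ((x i : ℕ) % q + 1) * p := by nlinarith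
    _ ≤ p * q := by nlinarith

lemma mulP_eq_zero_below {x : ℤ → Fin (p * q)} {N : ℤ} (hN : ∀ i < N, (x i : ℕ) = 0) :
    ∀ i < N - 1, (mulP p q hn x i : ℕ) = 0 := fun i hi => by
  rw [val_mulP, hN i (by omega), hN (i + 1) (by omega)]
  simp

lemma mulFrac_eq_zero_below {x : ℤ → Fin (p * q)} {N : ℤ} (hN : ∀ i < N, (x i : ℕ) = 0) :
    ∀ i < N - 1, (mulFrac p q hn x i : ℕ) = 0 := fun i hi =>
  mulP_eq_zero_below hn (mulP_eq_zero_below hn hN) (i - 1) (by omega)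

/-- Writing `x i = q * a i + b i`, the automaton maps the digits to `p * b i + a (i + 1)`, and
`∑ a (i + 1) (pq)^(-i-1) = pq ∑ a i (pq)^(-i-1)`. -/
lemma realN_mulP (h1 : 1 < p * q) {x : ℤ → Fin (p * q)} {N : ℤ}
    (hN : ∀ i < N, (x i : ℕ) = 0) : realN (p * q) (mulP p q hn x) = p * realN (p * q) x := by
  have hn1 : (1 : ℝ) < ((p * q : ℕ) : ℝ) := by exact_mod_cast h1
  set a : ℤ → ℝ := fun i => (((x i : ℕ) / q : ℕ) : ℝ)
  set b : ℤ → ℝ := fun i => (((x i : ℕ) % q : ℕ) : ℝ)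
  have ha : Summable fun i => a i * ((p * q : ℕ) : ℝ) ^ (-i - 1) :=
    summable_digits (N := N) hn1 (fun _ => by positivity)
      (fun i => (Nat.cast_le.2 (Nat.div_le_self _ _)).trans (digit_le x i))
      fun i hi => by simp [a, hN i hi]
  have hb : Summable fun i => b i * ((p * q : ℕ) : ℝ) ^ (-i - 1) :=
    summable_digits (N := N) hn1 (fun _ => by positivity)
      (fun i => (Nat.cast_le.2 (Nat.mod_le _ _)).trans (digit_le x i))
      fun i hi => by simp [b, hN i hi]
  have ha' : Summable fun i => a (i + 1) * ((p * q : ℕ) : ℝ) ^ (-i - 1) :=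
    summable_digits (N := N - 1) hn1 (fun _ => by positivity)
      (fun i => (Nat.cast_le.2 (Nat.div_le_self _ _)).trans (digit_le x (i + 1)))
      fun i hi => by simp [a, hN (i + 1) (by omega)]
  have hmulP : (fun i => ((mulP p q hn x i : ℕ) : ℝ)) = fun i => p * b i + a (i + 1) := by
    ext i; simp only [val_mulP, a, b]; push_cast; ring
  have hx : (fun i => ((x i : ℕ) : ℝ)) = fun i => b i + q * a i := by
    ext i; simp only [a, b]; exact_mod_cast (Nat.mod_add_div _ _).symm
  rw [realN_eq_realOfDigits, realN_eq_realOfDigits, hmulP, hx,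
    realOfDigits_add (by simpa only [mul_assoc] using hb.mul_left (p : ℝ)) ha',
    realOfDigits_add hb (by simpa only [mul_assoc] using ha.mul_left (q : ℝ)),
    realOfDigits_const_mul, realOfDigits_const_mul, realOfDigits_comp_add (by positivity), zpow_one]
  push_cast
  ring

lemma realN_mulFrac (h1 : 1 < p * q) {x : ℤ → Fin (p * q)} {N : ℤ}
    (hN : ∀ i < N, (x i : ℕ) = 0) :
    realN (p * q) (mulFrac p q hn x) = p / q * realN (p * q) x := by
  have hq : (q : ℝ) ≠ 0 := by exact_mod_cast (Nat.pos_of_mul_pos_left hn).ne'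
  have hp : (p : ℝ) ≠ 0 := by exact_mod_cast (Nat.pos_of_mul_pos_right hn).ne'
  rw [realN_eq_realOfDigits]
  simp only [mulFrac, sub_eq_add_neg]
  rw [realOfDigits_comp_add (f := fun i => ((mulP p q hn (mulP p q hn x) i : ℕ) : ℝ))
      (by positivity), ← realN_eq_realOfDigits,
    realN_mulP hn h1 (mulP_eq_zero_below hn hN), realN_mulP hn h1 hN]
  push_cast
  field_simp

lemma numberLike_mulFrac (h1 : 1 < p * q) {x : ℤ → Fin (p * q)} (hx : NumberLikeF x) :
    NumberLikeF (mulFrac p q hn x) := by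
  obtain ⟨N, hN⟩ := hx.2
  refine ⟨exists_ne_zero_of_realN_ne_zero (n := p * q) ?_, N - 1, mulFrac_eq_zero_below hn hN⟩
  have hp : 0 < p := Nat.pos_of_mul_pos_right hn
  have hq : 0 < q := Nat.pos_of_mul_pos_left hn
  rw [realN_mulFrac hn h1 hN]
  exact mul_ne_zero (by positivity) (realN_pos h1 hx).ne'

end Multiplication

lemma tendsto_div_natCast_of_abs_sub_mul_le {u : ℕ → ℝ} {c C : ℝ}
    (h : ∀ t : ℕ, |u t - t * c| ≤ C) : Tendsto (fun t : ℕ => u t / t) atTop (𝓝 c) := by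
  have herr : Tendsto (fun t : ℕ => (u t - t * c) / t) atTop (𝓝 0) := by
    refine squeeze_zero_norm (fun t => ?_) (tendsto_const_div_atTop_nhds_zero_nat C)
    rw [norm_div, Real.norm_eq_abs, Real.norm_natCast]
    exact div_le_div_of_nonneg_right (h t) (Nat.cast_nonneg t)
  refine (by simpa using herr.const_add c : Tendsto _ _ (𝓝 c)).congr' ?_
  filter_upwards [eventually_ne_atTop 0] with t ht
  field_simp
  ring

section Iterates

variable {p q : ℕ} (hn : 0 < p * q) {x : ℤ → Fin (p * q)}

lemma numberLike_iterate_mulFrac (h1 : 1 < p * q) (hx : NumberLikeF x) (t : ℕ) :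
    NumberLikeF ((mulFrac p q hn)^[t] x) := by
  induction t with
  | zero => exact hx
  | succ t ih => rw [Function.iterate_succ_apply']; exact numberLike_mulFrac hn h1 ih

lemma logb_realN_iterate_mulFrac (h1 : 1 < p * q) (hx : NumberLikeF x) (t : ℕ) :
    Real.logb (p * q : ℕ) (realN (p * q) ((mulFrac p q hn)^[t] x)) =
      t * Real.logb (p * q : ℕ) (p / q) + Real.logb (p * q : ℕ) (realN (p * q) x) := by
  have hp : 0 < p := Nat.pos_of_mul_pos_right hn
  have hq : 0 < q := Nat.pos_of_mul_pos_left hn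
  have hreal : realN (p * q) ((mulFrac p q hn)^[t] x) = (p / q : ℝ) ^ t * realN (p * q) x := by
    induction t with
    | zero => simp
    | succ t ih =>
      obtain ⟨_, N, hN⟩ := numberLike_iterate_mulFrac hn h1 hx t
      rw [Function.iterate_succ_apply', realN_mulFrac hn h1 hN, ih, pow_succ]
      ring
  rw [hreal, Real.logb_mul (by positivity) (realN_pos h1 hx).ne', Real.logb_pow]

lemma tendsto_neg_lboundF_iterate_mulFrac (h1 : 1 < p * q) (hx : NumberLikeF x) :
    Tendsto (fun t : ℕ => -(lboundF ((mulFrac p q hn)^[t] x) : ℝ) / t) atTop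
      (𝓝 (Real.logb (p * q : ℕ) (p / q))) := by
  refine tendsto_div_natCast_of_abs_sub_mul_le
    (C := |Real.logb (p * q : ℕ) (realN (p * q) x)| + 1) fun t => ?_
  have hedge := logb_realN_mem_Icc h1 (numberLike_iterate_mulFrac hn h1 hx t)
  rw [logb_realN_iterate_mulFrac hn h1 hx t] at hedge
  have hb := abs_le.1 (le_refl |Real.logb (p * q : ℕ) (realN (p * q) x)|)
  rw [abs_le]
  constructor <;> linarith [hedge.1, hedge.2, hb.1, hb.2]

lemma exists_lboundF_iterate_mulFrac_lt (hpq : q < p) (hx : NumberLikeF x) :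
    ∃ t : ℕ, 1 ≤ t ∧ lboundF ((mulFrac p q hn)^[t] x) < lboundF x := by
  have hq : 0 < q := Nat.pos_of_mul_pos_left hn
  have h1 : 1 < p * q := by nlinarith
  have hc : 0 < Real.logb (p * q : ℕ) (p / q) :=
    Real.logb_pos (by exact_mod_cast h1) ((one_lt_div (by positivity)).2 (by exact_mod_cast hpq))
  obtain ⟨t, ht⟩ := exists_nat_gt (1 / Real.logb (p * q : ℕ) (p / q))
  have htc : 1 < t * Real.logb (p * q : ℕ) (p / q) := (div_lt_iff₀ hc).1 ht
  have hedge_t := logb_realN_mem_Icc h1 (numberLike_iterate_mulFrac hn h1 hx t)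
  have hedge_0 := logb_realN_mem_Icc h1 hx
  rw [logb_realN_iterate_mulFrac hn h1 hx t] at hedge_t
  refine ⟨t, ?_, ?_⟩
  · rw [Nat.one_le_iff_ne_zero]
    rintro rfl
    norm_num at htc
  · have : (lboundF ((mulFrac p q hn)^[t] x) : ℝ) < lboundF x := by linarith [hedge_t.2, hedge_0.1]
    exact_mod_cast this

end Iterates

theorem stmt_16_general (p q : ℕ) (hpq : q < p) (hn : 0 < p * q) :
    LeftSpreadingF (mulFrac p q hn) ∧
    (∀ x : ℤ → Fin (p * q), NumberLikeF x →
      Filter.limsup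
        (fun t : ℕ => -((lboundF ((mulFrac p q hn)^[t] x) : ℝ)) / (t : ℝ)) Filter.atTop
        ≤ Real.logb ((p * q : ℕ) : ℝ) ((p : ℝ) / (q : ℝ))) ∧
    spreadingSpeedF (mulFrac p q hn) = Real.logb ((p * q : ℕ) : ℝ) ((p : ℝ) / (q : ℝ)) := by
  have h1 : 1 < p * q := by nlinarith [Nat.pos_of_mul_pos_left hn]
  have hlim (x : ℤ → Fin (p * q)) (hx : NumberLikeF x) :
      limsup (fun t : ℕ => -(lboundF ((mulFrac p q hn)^[t] x) : ℝ) / t) atTop =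
        Real.logb (p * q : ℕ) (p / q) :=
    (tendsto_neg_lboundF_iterate_mulFrac hn h1 hx).limsup_eq
  refine ⟨⟨fun x hx i => by simp [mulFrac, mulP, mulRule, hx],
    fun x hx => exists_lboundF_iterate_mulFrac_lt hn hpq hx⟩, fun x hx => (hlim x hx).le, ?_⟩
  have hx₀ : NumberLikeF (fun i : ℤ => if i = 0 then (⟨1, h1⟩ : Fin (p * q)) else ⟨0, hn⟩) :=
    ⟨⟨0, by simp⟩, 0, fun i hi => by simp [hi.ne]⟩
  have : Nonempty {x : ℤ → Fin (p * q) // NumberLikeF x} := ⟨⟨_, hx₀⟩⟩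
  exact (iSup_congr fun x : {x // NumberLikeF x} => hlim x.1 x.2).trans ciSup_const

/-- The fractional multiplication automaton `Mul_{p/q,pq}` (`p > q > 1` coprime) is left
spreading on number-like configurations with spreading speed `log_{pq}(p/q)`; in
particular every number-like `x` has `limsup_t (-lbound(Mul_{p/q,pq}^t(x)))/t ≤
log_{pq}(p/q)`, and equality is attained in the supremum over number-like `x`. -/
theorem stmt_16 (p q : ℕ) (hq : 1 < q) (hpq : q < p) (hco : Nat.Coprime p q)
    (hn : 0 < p * q) :
    LeftSpreadingF (mulFrac p q hn) ∧
    (∀ x : ℤ → Fin (p * q), NumberLikeF x →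
      Filter.limsup
        (fun t : ℕ => -((lboundF ((mulFrac p q hn)^[t] x) : ℝ)) / (t : ℝ)) Filter.atTop
        ≤ Real.logb ((p * q : ℕ) : ℝ) ((p : ℝ) / (q : ℝ))) ∧
    spreadingSpeedF (mulFrac p q hn) = Real.logb ((p * q : ℕ) : ℝ) ((p : ℝ) / (q : ℝ)) :=
  stmt_16_general p q hpq hn
end

section
/- Morse–Hedlund theorem (one-sided version): if a one-sided sequence x ∈ A^N over a finite alphabet A is not eventually periodic, then for every n ≥ 1 the number of distinct factors (subwords) of length n occurring in x is at least n + 1. -/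
theorem EvPeriodicSeq.comp {B C : Type*} {y : ℕ → B} (g : B → C) (hy : EvPeriodicSeq y) :
    EvPeriodicSeq (g ∘ y) := by
  obtain ⟨p, hp, c, hc⟩ := hy
  exact ⟨p, hp, c, fun t ht => congrArg g (hc t ht)⟩

theorem evPeriodicSeq_of_succ_congr {B : Type*} [Finite B] (y : ℕ → B)
    (hy : ∀ i j, y i = y j → y (i + 1) = y (j + 1)) : EvPeriodicSeq y := by
  obtain ⟨i, j, hne, hij⟩ := Finite.exists_ne_map_eq_of_infinite y
  wlog hlt : i < j generalizing i j
  · exact this j i hne.symm hij.symm (by omega)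
  have shift : ∀ t, y (i + t) = y (j + t) := by
    intro t
    induction t with
    | zero => exact hij
    | succ t ih => exact hy _ _ ih
  refine ⟨j - i, by omega, i, fun t ht => ?_⟩
  obtain ⟨s, rfl⟩ := Nat.exists_eq_add_of_le ht
  rw [show i + s + (j - i) = j + s by omega]
  exact (shift s).symm

section Factors

variable {A : Type*} (x : ℕ → A)

def factor (n i : ℕ) : Fin n → A := fun k => x (i + k.val)

def factors (n : ℕ) : Set (Fin n → A) := Set.range (factor x n)

theorem init_factor (n i : ℕ) : Fin.init (factor x (n + 1) i) = factor x n i := rfl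

theorem tail_factor (n i : ℕ) : Fin.tail (factor x (n + 1) i) = factor x n (i + 1) := by
  funext k
  simp only [Fin.tail, factor, Fin.val_succ]
  congr 1
  omega

theorem ncard_factors_zero : (factors x 0).ncard = 1 :=
  Set.ncard_eq_one.mpr ⟨factor x 0 0, Set.eq_singleton_iff_unique_mem.mpr
    ⟨⟨0, rfl⟩, fun _ _ => Subsingleton.elim _ _⟩⟩

theorem image_init_factors (n : ℕ) : Fin.init '' factors x (n + 1) = factors x n := by
  simp only [factors, ← Set.range_comp]
  rfl

variable [Finite A]

theorem evPeriodicSeq_of_ncard_factors_succ_le {n : ℕ}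
    (h : (factors x (n + 1)).ncard ≤ (factors x n).ncard) : EvPeriodicSeq x := by
  have hcard : (Fin.init '' factors x (n + 1)).ncard = (factors x (n + 1)).ncard :=
    le_antisymm (Set.ncard_image_le (Set.toFinite _)) (image_init_factors x n ▸ h)
  have hinj := Set.injOn_of_ncard_image_eq hcard (Set.toFinite _)
  have hdet : ∀ i j, factor x (n + 1) i = factor x (n + 1) j →
      factor x (n + 1) (i + 1) = factor x (n + 1) (j + 1) := by
    intro i j hij
    refine hinj ⟨i + 1, rfl⟩ ⟨j + 1, rfl⟩ ?_
    rw [init_factor, init_factor, ← tail_factor, ← tail_factor, hij]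
  exact (evPeriodicSeq_of_succ_congr _ hdet).comp (fun w => w 0)

theorem ncard_factors_lt_succ (hx : ¬ EvPeriodicSeq x) (n : ℕ) :
    (factors x n).ncard < (factors x (n + 1)).ncard :=
  lt_of_not_ge fun h => hx (evPeriodicSeq_of_ncard_factors_succ_le x h)

theorem le_ncard_factors (hx : ¬ EvPeriodicSeq x) (n : ℕ) : n + 1 ≤ (factors x n).ncard := by
  induction n with
  | zero => exact (ncard_factors_zero x).ge
  | succ n ih => exact ih.trans_lt (ncard_factors_lt_succ x hx n)

end Factors

theorem stmt_18_general {A : Type*} [Fintype A] (x : ℕ → A) (hx : ¬ EvPeriodicSeq x)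
    (n : ℕ) :
    n + 1 ≤ (Set.range fun i : ℕ => fun k : Fin n => x (i + k.val)).ncard :=
  le_ncard_factors x hx n

/-- Morse–Hedlund theorem (one-sided version): if `x ∈ A^ℕ` over a finite alphabet is
not eventually periodic, then for every `n ≥ 1` at least `n + 1` distinct words of
length `n` occur in `x`. -/
theorem stmt_18 {A : Type*} [Fintype A] (x : ℕ → A) (hx : ¬ EvPeriodicSeq x)
    (n : ℕ) (hn : 1 ≤ n) :
    n + 1 ≤ (Set.range fun i : ℕ => fun k : Fin n => x (i + k.val)).ncard :=
  stmt_18_general x hx n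
end

section
/- For any coprime integers p > q > 1 and any number-like configuration x over {0,...,pq-1}, and any i ∈ Z, the width-1 column trace tr_{Mul_{p/q,pq}, i}(x) = (Mul_{p/q,pq}^t(x)[i])_{t∈N} is not eventually periodic. (This follows from rapid left expansivity of Mul_{p/q,pq}: it is left expansive with dimensions (1,1,1) and left spreading with speed log_{pq}(p/q) < 1.) -/
/-! For a configuration `y` vanishing to the left of a window, let `V_col(y)` be the integer whose
base-`pq` digits are those of `y` up to column `col`, with `y col` as units digit. Multiplying digit
by digit with carries gives `q V_col(F y) = p V_col(y) + q a - p (y col mod q)` for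
`F = Mul_{p/q,pq}` and a carry `a < p`, and `V_col(y) ≡ y col (mod pq)`. If the trace at `i` were
eventually `P`-periodic, the differences `D_t = V_i(F^{t+P} x) - V_i(F^t x)` would be multiples of
`pq`; this forces equal carries, hence `q D_{t+1} = p D_t`, so `D_t` is divisible by every power
of `q` and vanishes. Thus `V_i(F^t x)` takes a single value along `t = c + kP`. But at a column
`i + K` to the right of a nonzero digit of `x`, `V` starts at `≥ pq` and, as `p > q`, increases at
every step, while `V_{i+K} < (pq)^K (V_i + 1)`. -/

theorem eq_zero_of_forall_mul_succ_eq_mul {p q : ℕ} (hco : p.Coprime q) (hq : 1 < q)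
    {D : ℕ → ℤ} {c : ℕ} (h : ∀ t ≥ c, q * D (t + 1) = p * D t) : ∀ t ≥ c, D t = 0 := by
  intro t ht
  have hpow : ∀ k : ℕ, (p : ℤ) ^ k * D t = q ^ k * D (t + k) := by
    intro k
    induction k with
    | zero => simp
    | succ k ih =>
      rw [pow_succ, pow_succ, mul_right_comm, ih, ← add_assoc, mul_assoc, mul_assoc,
        h (t + k) (by omega)]
      ring
  have hdvd : ∀ k : ℕ, (q : ℤ) ^ k ∣ D t := fun k =>
    ((Nat.Coprime.isCoprime hco.symm).pow).dvd_of_dvd_mul_left ⟨D (t + k), hpow k⟩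
  by_contra hD
  obtain ⟨k, hk⟩ :=
    (Int.finiteMultiplicity_iff (a := q) (b := D t)).mpr ⟨by simp; omega, hD⟩
  exact hk (hdvd (k + 1))

theorem periodic_of_recurrence {p q : ℕ} (hco : p.Coprime q) (hq : 1 < q) {m a d : ℕ → ℕ}
    (ha : ∀ t, a t < p) (hmod : ∀ t, m t ≡ d t [MOD p * q])
    (hrec : ∀ t, q * m (t + 1) + p * (d t % q) = p * m t + q * a t)
    {P c : ℕ} (hd : ∀ t ≥ c, d (t + P) = d t) : ∀ t ≥ c, m (t + P) = m t := by
  set D : ℕ → ℤ := fun t => m (t + P) - m t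
  have hdvd : ∀ t ≥ c, (p : ℤ) * q ∣ D t := fun t ht => by
    simpa using Nat.modEq_iff_dvd.mp ((hmod t).trans (hd t ht ▸ hmod (t + P)).symm)
  have hrecZ : ∀ t, (q : ℤ) * m (t + 1) + p * (d t % q : ℕ) = p * m t + q * a t := fun t => by
    exact_mod_cast hrec t
  have hdiff : ∀ t ≥ c, (q : ℤ) * D (t + 1) - p * D t = q * ((a (t + P) : ℤ) - a t) := by
    intro t ht
    have h1 := hrecZ (t + P)
    rw [hd t ht, add_right_comm] at h1
    linear_combination h1 - hrecZ t
  -- two carries in `[0, p)` that differ by a multiple of `p` are equal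
  have hcarry : ∀ t ≥ c, a (t + P) = a t := by
    intro t ht
    have hpq : (p : ℤ) * q ∣ ((a (t + P) : ℤ) - a t) * q := by
      rw [show ((a (t + P) : ℤ) - a t) * q = q * D (t + 1) - p * D t by rw [hdiff t ht]; ring]
      exact dvd_sub (dvd_mul_of_dvd_right (hdvd _ (by omega)) _)
        (dvd_mul_of_dvd_right (hdvd t ht) _)
    have hp := (mul_dvd_mul_iff_right (by positivity : (q : ℤ) ≠ 0)).mp hpq
    have := Int.eq_zero_of_abs_lt_dvd hp (by have := ha t; have := ha (t + P); rw [abs_lt]; omega)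
    omega
  have hD := eq_zero_of_forall_mul_succ_eq_mul hco hq (c := c) (D := D) fun t ht =>
    sub_eq_zero.mp (by simpa [hcarry t ht] using hdiff t ht)
  intro t ht
  exact_mod_cast sub_eq_zero.mp (hD t ht)

theorem add_le_of_recurrence {p q : ℕ} (hpq : q < p) {m a b : ℕ → ℕ} (hb : ∀ t, b t < q)
    (hrec : ∀ t, q * m (t + 1) + p * b t = p * m t + q * a t) (h0 : p * q ≤ m 0) :
    ∀ t, m 0 + t ≤ m t := by
  intro t
  induction t with
  | zero => rfl
  | succ t ih =>
    have hbt := hb t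
    have hrt := hrec t
    have : q * (m t + 1) ≤ q * m (t + 1) := by nlinarith
    have := Nat.le_of_mul_le_mul_left this (by omega)
    omega

/-- The digits `y col, y (col - 1), …, y (col - L + 1)` read as a base-`n` integer, `y col` being
the units digit. -/
def windowVal (n : ℕ) (y : ℤ → Fin n) (col : ℤ) (L : ℕ) : ℕ :=
  Nat.ofDigits n ((List.range L).map fun k : ℕ => (y (col - k) : ℕ))

section Window

variable {n : ℕ} (y : ℤ → Fin n) (col : ℤ)

theorem windowVal_add (K L : ℕ) :
    windowVal n y col (K + L) = windowVal n y col K + n ^ K * windowVal n y (col - K) L := by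
  simp only [windowVal, List.range_add, List.map_append, List.map_map, Nat.ofDigits_append,
    List.length_map, List.length_range]
  congr 4
  funext k
  simp [sub_add_eq_sub_sub]

theorem windowVal_succ (L : ℕ) :
    windowVal n y col (L + 1) = windowVal n y col L + n ^ L * y (col - L) := by
  rw [windowVal_add]
  simp [windowVal, Nat.ofDigits_singleton]

theorem windowVal_one_add (L : ℕ) :
    windowVal n y col (1 + L) = y col + n * windowVal n y (col - 1) L := by
  rw [windowVal_add]
  simp [windowVal, Nat.ofDigits_singleton]

variable {y col}

theorem windowVal_succ_of_eq_zero {L : ℕ} (h : (y (col - L) : ℕ) = 0) :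
    windowVal n y col (L + 1) = windowVal n y col L := by
  simp [windowVal_succ, h]

theorem windowVal_modEq_of_eq_zero {L : ℕ} (h : (y (col - L) : ℕ) = 0) :
    windowVal n y col L ≡ y col [MOD n] := by
  rw [← windowVal_succ_of_eq_zero h, add_comm, windowVal_one_add]
  exact Nat.add_mul_mod_self_left _ _ _

variable (y col)

theorem windowVal_lt_pow (hn : 1 < n) (L : ℕ) : windowVal n y col L < n ^ L := by
  unfold windowVal
  exact (Nat.ofDigits_lt_base_pow_length hn (by simp)).trans_eq (by simp)

theorem pow_mul_le_windowVal {k L : ℕ} (hk : k < L) :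
    n ^ k * y (col - k) ≤ windowVal n y col L := by
  obtain ⟨r, rfl⟩ := Nat.exists_eq_add_of_lt hk
  rw [add_assoc, add_comm r, windowVal_add, windowVal_one_add]
  exact le_add_left (Nat.mul_le_mul_left _ (Nat.le_add_right _ _))

theorem le_windowVal {col j : ℤ} {L : ℕ} (hj : col - L < j) (hjc : j < col)
    (hy : (y j : ℕ) ≠ 0) : n ≤ windowVal n y col L := by
  have hk : (col - j).toNat < L := by omega
  have hle := pow_mul_le_windowVal y col hk
  rw [show col - ((col - j).toNat : ℕ) = j by omega] at hle
  calc n = n ^ 1 * 1 := by ring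
    _ ≤ n ^ (col - j).toNat * y j :=
        Nat.mul_le_mul (Nat.pow_le_pow_right (y j).pos (by omega)) (Nat.one_le_iff_ne_zero.mpr hy)
    _ ≤ windowVal n y col L := hle

end Window

section Automaton

variable {p q : ℕ} (hn : 0 < p * q) (y : ℤ → Fin (p * q))

theorem mulP_val (j : ℤ) : (mulP p q hn y j : ℕ) = y j % q * p + y (j + 1) / q := by
  have hq : 0 < q := Nat.pos_of_mul_pos_left hn
  refine Nat.mod_eq_of_lt ?_
  have h1 : (y j : ℕ) % q + 1 ≤ q := Nat.mod_lt _ hq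
  have h2 : (y (j + 1) : ℕ) / q < p :=
    Nat.div_lt_of_lt_mul ((y (j + 1)).isLt.trans_eq (mul_comm p q))
  nlinarith

theorem mulP_val_eq_zero {j : ℤ} (h₀ : (y j : ℕ) = 0) (h₁ : (y (j + 1) : ℕ) = 0) :
    (mulP p q hn y j : ℕ) = 0 := by
  simp [mulP_val, h₀, h₁]

theorem mulP_div_lt (j : ℤ) : (mulP p q hn y j : ℕ) / q < p :=
  Nat.div_lt_of_lt_mul ((mulP p q hn y j).isLt.trans_eq (mul_comm p q))

theorem windowVal_mulP (col : ℤ) (L : ℕ) :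
    windowVal (p * q) (mulP p q hn y) col L + (p * q) ^ L * (y (col + 1 - L) / q)
      = p * windowVal (p * q) y col L + y (col + 1) / q := by
  induction L with
  | zero => simp [windowVal]
  | succ L ih =>
    have hdm := Nat.div_add_mod (y (col - L) : ℕ) q
    rw [windowVal_succ, windowVal_succ, mulP_val, show col - L + 1 = col + 1 - L by ring,
      show col + 1 - ((L + 1 : ℕ) : ℤ) = col - L by push_cast; ring]
    linear_combination ih + p * (p * q) ^ L * hdm

theorem mulFrac_val_eq_zero {lo : ℤ} (h : ∀ j ≤ lo, (y j : ℕ) = 0) :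
    ∀ j ≤ lo - 1, (mulFrac p q hn y j : ℕ) = 0 := by
  have hmul : ∀ j ≤ lo - 1, (mulP p q hn y j : ℕ) = 0 := fun j hj =>
    mulP_val_eq_zero hn y (h j (by omega)) (h (j + 1) (by omega))
  intro j hj
  exact mulP_val_eq_zero hn _ (hmul (j - 1) (by omega)) (by simpa using hmul j (by omega))

theorem windowVal_mulFrac {col : ℤ} {L : ℕ} (h : ∀ j ≤ col - L, (y j : ℕ) = 0) :
    q * windowVal (p * q) (mulFrac p q hn y) col (L + 1) + p * (y col % q)
      = p * windowVal (p * q) y col L + q * (mulP p q hn y col / q) := by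
  have hshift : windowVal (p * q) (mulFrac p q hn y) col (L + 1)
      = windowVal (p * q) (mulP p q hn (mulP p q hn y)) (col - 1) (L + 1) := by
    simp only [windowVal, mulFrac, sub_right_comm]
  have hidx : col - 1 + 1 - ((L + 1 : ℕ) : ℤ) = col - L - 1 := by push_cast; ring
  have outer := windowVal_mulP hn (mulP p q hn y) (col - 1) (L + 1)
  have inner := windowVal_mulP hn y (col - 1) (L + 1)
  rw [hidx, sub_add_cancel, mulP_val_eq_zero hn y (h _ (by omega)) (h _ (by omega)),
    Nat.zero_div, mul_zero, add_zero] at outer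
  rw [hidx, sub_add_cancel, h _ (by omega), Nat.zero_div, mul_zero, add_zero,
    windowVal_succ_of_eq_zero (h _ (by omega))] at inner
  have hlead : windowVal (p * q) y col L = y col + p * q * windowVal (p * q) y (col - 1) L := by
    rw [← windowVal_succ_of_eq_zero (h _ le_rfl), add_comm, windowVal_one_add]
  have hdm := Nat.div_add_mod (y col : ℕ) q
  rw [hshift, hlead]
  linear_combination q * outer + p * q * inner + p * hdm

end Automaton

section Trace

variable {p q : ℕ} (hn : 0 < p * q)

/-- The window grows by one cell per step, as fast as the support of `F^t x` spreads to the left. -/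
def traceWindowVal (x : ℤ → Fin (p * q)) (col : ℤ) (L t : ℕ) : ℕ :=
  windowVal (p * q) ((mulFrac p q hn)^[t] x) col (L + t)

variable {hn} {x : ℤ → Fin (p * q)}

theorem iterate_mulFrac_val_eq_zero {lo : ℤ} (hx : ∀ j ≤ lo, (x j : ℕ) = 0) (t : ℕ) :
    ∀ j ≤ lo - t, ((mulFrac p q hn)^[t] x j : ℕ) = 0 := by
  induction t with
  | zero => simpa using hx
  | succ t ih =>
    rw [Function.iterate_succ_apply']
    exact fun j hj => mulFrac_val_eq_zero hn _ ih j (by push_cast at hj; omega)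

variable {col : ℤ} {L : ℕ}

theorem traceWindowVal_succ (hx : ∀ j ≤ col - L, (x j : ℕ) = 0) (t : ℕ) :
    q * traceWindowVal hn x col L (t + 1) + p * ((mulFrac p q hn)^[t] x col % q)
      = p * traceWindowVal hn x col L t + q * (mulP p q hn ((mulFrac p q hn)^[t] x) col / q) := by
  rw [traceWindowVal, traceWindowVal, Function.iterate_succ_apply', ← add_assoc]
  exact windowVal_mulFrac hn _ fun j hj => iterate_mulFrac_val_eq_zero hx t j (by omega)

theorem traceWindowVal_modEq (hx : ∀ j ≤ col - L, (x j : ℕ) = 0) (t : ℕ) :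
    traceWindowVal hn x col L t ≡ (mulFrac p q hn)^[t] x col [MOD p * q] :=
  windowVal_modEq_of_eq_zero (iterate_mulFrac_val_eq_zero hx t _ (by push_cast; omega))

theorem traceWindowVal_add_mul (hco : p.Coprime q) (hq : 1 < q)
    (hx : ∀ j ≤ col - L, (x j : ℕ) = 0) {P c : ℕ}
    (hper : ∀ t, c ≤ t → (mulFrac p q hn)^[t + P] x col = (mulFrac p q hn)^[t] x col)
    (k : ℕ) :
    traceWindowVal hn x col L (c + k * P) = traceWindowVal hn x col L c := by
  have hperiodic := periodic_of_recurrence hco hq (fun _ => mulP_div_lt hn _ col)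
    (traceWindowVal_modEq hx) (traceWindowVal_succ hx) (fun t ht => by rw [hper t ht])
  induction k with
  | zero => simp
  | succ k ih => rw [add_mul, one_mul, ← add_assoc, hperiodic _ (by omega), ih]

theorem le_traceWindowVal (hpq : q < p) (hx : ∀ j ≤ col - L, (x j : ℕ) = 0)
    (h0 : p * q ≤ windowVal (p * q) x col L) (t : ℕ) : t ≤ traceWindowVal hn x col L t :=
  le_of_add_le_right (add_le_of_recurrence hpq (fun _ => Nat.mod_lt _ (Nat.pos_of_mul_pos_left hn))
    (traceWindowVal_succ hx) h0 t)

theorem traceWindowVal_add_lt (hn' : 1 < p * q) (K : ℕ) (t : ℕ) :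
    traceWindowVal hn x (col + K) (K + L) t < (p * q) ^ K * (traceWindowVal hn x col L t + 1) := by
  rw [traceWindowVal, add_assoc, windowVal_add, add_sub_cancel_right]
  have := windowVal_lt_pow ((mulFrac p q hn)^[t] x) (col + K) hn' K
  rw [traceWindowVal]
  linarith

end Trace

/-- For coprime `p > q > 1`, any number-like configuration `x` over `{0,...,pq-1}`
and any `i ∈ ℤ`, the width-1 column trace `t ↦ Mul_{p/q,pq}^t(x)[i]` is not eventually
periodic. -/
theorem stmt_19 (p q : ℕ) (hq : 1 < q) (hpq : q < p) (hco : Nat.Coprime p q)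
    (hn : 0 < p * q) (x : ℤ → Fin (p * q)) (hx : NumberLikeF x) (i : ℤ) :
    ¬ EvPeriodicSeq (fun t : ℕ => (mulFrac p q hn)^[t] x i) := by
  rintro ⟨P, hP, c, hper⟩
  obtain ⟨⟨i₀, hi₀⟩, N, hN⟩ := hx
  set L := (i - N + 1).toNat
  set K := (i₀ + 1 - i).toNat
  have hxL : ∀ j ≤ i - L, (x j : ℕ) = 0 := fun j hj => hN j (by omega)
  have hxKL : ∀ j ≤ i + K - ((K + L : ℕ) : ℤ), (x j : ℕ) = 0 := fun j hj => hN j (by omega)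
  have hi₀N : N ≤ i₀ := by by_contra h; exact hi₀ (hN i₀ (by omega))
  have hgrow := le_traceWindowVal (hn := hn) hpq hxKL
    (le_windowVal x (j := i₀) (by omega) (by omega) hi₀)
  have hconst := traceWindowVal_add_mul hco hq hxL hper
  set k := (p * q) ^ K * (traceWindowVal hn x i L c + 1) with hk
  have hlt := traceWindowVal_add_lt (hn := hn) (x := x) (col := i) (L := L)
    (by nlinarith : 1 < p * q) K (c + k * P)
  rw [hconst, ← hk] at hlt
  have hge := hgrow (c + k * P)
  have hkP := Nat.le_mul_of_pos_right k hP
  omega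
end
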